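/- arXiv:2410.22607 — 8 statements merged into one kernel-verified Lean document; each statement's English description precedes it below -/
import Mathlib

section
/- Let (V, B) be a packing design PD_λ(v,k,t) with exactly n blocks. For each i ∈ {0,…,n} let N_i denote the number of points of V whose frequency (number of blocks containing them) is exactly i. Then Σ_{i=1}^{n} C(i, λ+1) · N_i ≤ (t-1) · C(n, λ+1). -/
/-! Double count the pairs (x, S) where S is a set of λ + 1 blocks all containing the point x.
A point of frequency i lies in C(i, λ+1) such sets S. Conversely, the points common to λ + 1
blocks number at most t - 1, since t of them would form a t-subset lying in λ + 1 blocks. -/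

open scoped Classical

/-- A packing design PD_λ(v,k,t): a multiset of k-subsets of `Fin v` such that
every t-subset of points is contained in at most λ blocks. -/
def IsPD (v k t lam : ℕ) (B : Multiset (Finset (Fin v))) : Prop :=
  (∀ b ∈ B, b.card = k) ∧
  ∀ T : Finset (Fin v), T.card = t → B.countP (fun b => T ⊆ b) ≤ lam

/-- Frequency of a point: the number of blocks (with multiplicity) containing it. -/
def freq {v : ℕ} (B : Multiset (Finset (Fin v))) (x : Fin v) : ℕ :=
  B.countP (fun b => x ∈ b)

open Finset

theorem Multiset.countP_eq_card_filter_univ {α : Type*} [DecidableEq α] (m : Multiset α)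
    (p : α → Prop) [DecidablePred p] : m.countP p = #{x : m | p x} := by
  conv_lhs => rw [← m.map_univ_coe]
  rw [Multiset.countP_map, Finset.card, Finset.filter_val]

section Blocks

variable {α ι : Type*} [Fintype α] [DecidableEq α] [Fintype ι] (b : ι → Finset α)

theorem card_common_points_lt {t lam : ℕ}
    (hb : ∀ T : Finset α, #T = t → #{i | T ⊆ b i} ≤ lam) {S : Finset ι} (hS : lam < #S) :
    #{x | ∀ i ∈ S, x ∈ b i} < t := by
  by_contra! hcard
  obtain ⟨T, hT, hTcard⟩ := exists_subset_card_eq hcard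
  have hST : S ⊆ ({i | T ⊆ b i} : Finset ι) := fun i hi => by
    simp only [mem_filter, mem_univ, true_and]
    exact fun x hx => (mem_filter.1 (hT hx)).2 i hi
  have := card_le_card hST
  have := hb T hTcard
  omega

theorem sum_choose_degree_eq_sum_card_common_points (r : ℕ) :
    ∑ x, (#{i | x ∈ b i}).choose r = ∑ S ∈ powersetCard r univ, #{x | ∀ i ∈ S, x ∈ b i} := by
  have hchoose : ∀ x, (#{i | x ∈ b i}).choose r
      = #((powersetCard r univ).bipartiteAbove (fun x S => ∀ i ∈ S, x ∈ b i) x) := by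
    intro x
    rw [← card_powersetCard]
    congr 1
    ext S
    simp [bipartiteAbove, subset_iff, and_comm]
  simp_rw [hchoose, sum_card_bipartiteAbove_eq_sum_card_bipartiteBelow]
  rfl

theorem sum_choose_degree_le {t lam : ℕ}
    (hb : ∀ T : Finset α, #T = t → #{i | T ⊆ b i} ≤ lam) :
    ∑ x, (#{i | x ∈ b i}).choose (lam + 1) ≤ (t - 1) * (Fintype.card ι).choose (lam + 1) := by
  calc ∑ x, (#{i | x ∈ b i}).choose (lam + 1)
      = ∑ S ∈ powersetCard (lam + 1) univ, #{x | ∀ i ∈ S, x ∈ b i} :=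
        sum_choose_degree_eq_sum_card_common_points b _
    _ ≤ ∑ S ∈ powersetCard (lam + 1) (univ : Finset ι), (t - 1) :=
        sum_le_sum fun S hS => Nat.le_sub_one_of_lt <|
          card_common_points_lt b hb ((mem_powersetCard.1 hS).2 ▸ lam.lt_succ_self)
    _ = (t - 1) * (Fintype.card ι).choose (lam + 1) := by
        rw [sum_const, card_powersetCard, card_univ, smul_eq_mul, mul_comm]

end Blocks

theorem sum_Icc_choose_mul_card_fiber_eq {α : Type*} [Fintype α] (f : α → ℕ) {n : ℕ}
    (hf : ∀ x, f x ≤ n) (r : ℕ) :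
    ∑ i ∈ Icc 1 n, i.choose (r + 1) * #{x | f x = i} = ∑ x, (f x).choose (r + 1) := by
  calc ∑ i ∈ Icc 1 n, i.choose (r + 1) * #{x | f x = i}
      = ∑ i ∈ range (n + 1), i.choose (r + 1) * #{x | f x = i} := by
        refine sum_subset (fun i hi => by simp at hi ⊢; omega) fun i hi hi' => ?_
        obtain rfl : i = 0 := by simp at hi hi'; omega
        simp
    _ = ∑ x, (f x).choose (r + 1) := by
        rw [← sum_fiberwise_of_maps_to (g := f) (t := range (n + 1))
          (fun x _ => mem_range.2 (Nat.lt_succ_of_le (hf x)))]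
        refine sum_congr rfl fun i _ => ?_
        rw [sum_congr rfl fun x hx => by rw [(mem_filter.1 hx).2], sum_const, smul_eq_mul,
          mul_comm]

theorem stmt1_general (v k t lam n : ℕ)
    (B : Multiset (Finset (Fin v))) (hB : IsPD v k t lam B) (hn : Multiset.card B = n) :
    ∑ i ∈ Finset.Icc 1 n,
        i.choose (lam + 1) * (Finset.univ.filter (fun x : Fin v => freq B x = i)).card
      ≤ (t - 1) * n.choose (lam + 1) := by
  have hfreq : ∀ x, freq B x = #{i : B | x ∈ (i : Finset (Fin v))} := fun x =>
    B.countP_eq_card_filter_univ _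
  have hblocks : ∀ T : Finset (Fin v), #T = t → #{i : B | T ⊆ (i : Finset (Fin v))} ≤ lam :=
    fun T hT => B.countP_eq_card_filter_univ (T ⊆ ·) ▸ hB.2 T hT
  have hle : ∀ x, freq B x ≤ n := fun x => hn ▸ Multiset.countP_le_card _ _
  rw [sum_Icc_choose_mul_card_fiber_eq _ hle]
  simp only [hfreq]
  simpa [hn] using sum_choose_degree_le (fun i : B => (i : Finset (Fin v))) hblocks

theorem stmt1 (v k t lam n : ℕ) (ht : 2 ≤ t) (htk : t ≤ k) (hkv : k ≤ v) (hlam : 1 ≤ lam)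
    (B : Multiset (Finset (Fin v))) (hB : IsPD v k t lam B) (hn : Multiset.card B = n) :
    ∑ i ∈ Finset.Icc 1 n,
        i.choose (lam + 1) * (Finset.univ.filter (fun x : Fin v => freq B x = i)).card
      ≤ (t - 1) * n.choose (lam + 1) :=
  stmt1_general v k t lam n B hB hn
end

section
/- In a packing design PD_λ(v,k,t) with n blocks, at most t-1 points have frequency strictly greater than ((t-1)·n + λ)/t. -/
/-! If `t` points each had frequency above `((t-1)n + λ)/t`, each would miss fewer than
`(n - λ)/t` blocks, so together they would miss fewer than `n - λ` blocks (union bound), and more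
than `λ` blocks would contain all of them, contradicting the packing condition. -/

open scoped Classical

open Finset

namespace Multiset

variable {α : Type*}

lemma countP_or_le (p q : α → Prop) [DecidablePred p] [DecidablePred q] (s : Multiset α) :
    s.countP (fun a => p a ∨ q a) ≤ s.countP p + s.countP q := by
  rw [countP_eq_card_filter, countP_eq_card_filter, countP_eq_card_filter, ← card_add,
    filter_add_filter]
  exact card_le_card (le_add_right _ _)

lemma countP_not_subset_le_sum [DecidableEq α] (B : Multiset (Finset α)) (T : Finset α) :
    B.countP (fun b => ¬ T ⊆ b) ≤ ∑ x ∈ T, B.countP (fun b => x ∉ b) := by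
  induction T using Finset.induction with
  | empty => simp
  | insert a T ha ih =>
    rw [sum_insert ha]
    calc B.countP (fun b => ¬ insert a T ⊆ b)
        = B.countP (fun b => a ∉ b ∨ ¬ T ⊆ b) := by simp only [insert_subset_iff, not_and_or]
      _ ≤ B.countP (fun b => a ∉ b) + B.countP (fun b => ¬ T ⊆ b) := countP_or_le _ _ _
      _ ≤ _ := Nat.add_le_add_left ih _

lemma card_le_countP_subset_add_sum [DecidableEq α] (B : Multiset (Finset α)) (T : Finset α) :
    card B ≤ B.countP (fun b => T ⊆ b) + ∑ x ∈ T, B.countP (fun b => x ∉ b) := by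
  rw [card_eq_countP_add_countP (fun b => T ⊆ b)]
  exact Nat.add_le_add_left (countP_not_subset_le_sum B T) _

end Multiset

lemma freq_add_countP_not_mem {v : ℕ} (B : Multiset (Finset (Fin v))) (x : Fin v) :
    freq B x + B.countP (fun b => x ∉ b) = Multiset.card B :=
  (Multiset.card_eq_countP_add_countP _ B).symm

lemma IsPD.exists_mem_freq_le {v k t lam : ℕ} {B : Multiset (Finset (Fin v))}
    (hB : IsPD v k t lam B) (ht : 1 ≤ t) {T : Finset (Fin v)} (hT : T.card = t) :
    ∃ x ∈ T, t * freq B x ≤ (t - 1) * Multiset.card B + lam := by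
  have hcover : ∑ _x ∈ T, Multiset.card B ≤ ∑ x ∈ T, (lam + t * B.countP (fun b => x ∉ b)) := by
    rw [sum_add_distrib, sum_const, sum_const, hT, smul_eq_mul, smul_eq_mul, ← mul_sum, ← mul_add]
    exact Nat.mul_le_mul_left _ ((Multiset.card_le_countP_subset_add_sum B T).trans
      (Nat.add_le_add_right (hB.2 T hT) _))
  obtain ⟨x, hxT, hx⟩ := exists_le_of_sum_le (card_pos.mp (hT ▸ ht)) hcover
  refine ⟨x, hxT, ?_⟩
  have hsplit := freq_add_countP_not_mem B x
  obtain ⟨s, rfl⟩ := Nat.exists_eq_add_of_le' ht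
  rw [Nat.add_sub_cancel]
  nlinarith

theorem stmt3_general (v k t lam n : ℕ) (ht : 1 ≤ t)
    (B : Multiset (Finset (Fin v))) (hB : IsPD v k t lam B) (hn : Multiset.card B = n) :
    (Finset.univ.filter (fun x : Fin v => (t - 1) * n + lam < t * freq B x)).card ≤ t - 1 := by
  subst hn
  by_contra! hcard
  obtain ⟨T, hTS, hT⟩ := exists_subset_card_eq (Nat.le_of_pred_lt hcard)
  obtain ⟨x, hxT, hx⟩ := hB.exists_mem_freq_le ht hT
  have := (mem_filter.mp (hTS hxT)).2
  omega

theorem stmt3 (v k t lam n : ℕ) (ht : 1 ≤ t) (htk : t ≤ k) (hkv : k ≤ v) (hlam : 1 ≤ lam)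
    (B : Multiset (Finset (Fin v))) (hB : IsPD v k t lam B) (hn : Multiset.card B = n) :
    (Finset.univ.filter (fun x : Fin v => (t - 1) * n + lam < t * freq B x)).card ≤ t - 1 :=
  stmt3_general v k t lam n ht B hB hn
end

section
/- Let v ≥ k ≥ t ≥ 2 and λ ≥ 1 be integers. If a packing design PD_λ(v,k,t) with exactly d blocks exists, then (t-1)·C(d, λ+1) ≥ v·C(q, λ+1) + r·C(q, λ), where q and r are the unique integers with d·k = q·v + r and 0 ≤ r < v. -/
open scoped Classical

/-!
Double count the pairs `(x, S)` where `S` is a sub-multiset of `λ + 1` blocks all containing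
the point `x`. No `t` points lie in `λ + 1` blocks, so each `S` has at most `t - 1` common points,
whence `∑ₓ C(rₓ, λ + 1) ≤ (t - 1) C(d, λ + 1)`, where `rₓ` is the number of blocks through `x`.
On the other hand `∑ₓ rₓ = d k = q v + r`, and by convexity of `n ↦ C(n, λ + 1)` each
`C(rₓ, λ + 1)` is at least its tangent value `C(q, λ + 1) + (rₓ - q) C(q, λ)`; summing these
gives `v C(q, λ + 1) + r C(q, λ)`.
-/

open Finset

namespace Nat

theorem choose_succ_add_mul_le (q m j : ℕ) :
    q.choose (j + 1) + m * q.choose j ≤ (q + m).choose (j + 1) := by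
  induction m with
  | zero => simp
  | succ m ih =>
    have hmono : q.choose j ≤ (q + m).choose j := choose_le_choose j (le_add_right q m)
    rw [← add_assoc, choose_succ_succ', add_one_mul]
    omega

theorem choose_succ_le_add_mul (n m j : ℕ) :
    (n + m).choose (j + 1) ≤ n.choose (j + 1) + m * (n + m).choose j := by
  induction m with
  | zero => simp
  | succ m ih =>
    have hmono : (n + m).choose j ≤ (n + m + 1).choose j := choose_le_succ (n + m) j
    have hmul : m * (n + m).choose j ≤ m * (n + m + 1).choose j := Nat.mul_le_mul_left m hmono
    rw [← add_assoc, choose_succ_succ', add_one_mul]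
    omega

theorem choose_succ_tangent_le (n q j : ℕ) :
    (q.choose (j + 1) : ℤ) + (n - q) * q.choose j ≤ n.choose (j + 1) := by
  rcases le_total q n with h | h
  · obtain ⟨m, rfl⟩ := Nat.exists_eq_add_of_le h
    have := choose_succ_add_mul_le q m j
    push_cast
    linarith
  · obtain ⟨m, rfl⟩ := Nat.exists_eq_add_of_le h
    have := choose_succ_le_add_mul n m j
    push_cast
    linarith

end Nat

theorem Finset.card_mul_choose_add_le_sum_choose {ι : Type*} (s : Finset ι) (f : ι → ℕ)
    {q r : ℕ} (j : ℕ) (h : ∑ i ∈ s, f i = q * #s + r) :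
    #s * q.choose (j + 1) + r * q.choose j ≤ ∑ i ∈ s, (f i).choose (j + 1) := by
  have hZ : ∑ i ∈ s, (f i : ℤ) = q * #s + r := by exact_mod_cast h
  have key := sum_le_sum fun i (_ : i ∈ s) => Nat.choose_succ_tangent_le (f i) q j
  rw [sum_add_distrib, ← sum_mul, sum_sub_distrib, hZ] at key
  simp only [sum_const, nsmul_eq_mul] at key
  zify
  linarith

namespace Multiset

variable {α β : Type*}

theorem sum_countP_eq_sum_map_card_filter (s : Finset α) (P : α → β → Prop)
    [∀ x b, Decidable (P x b)] (M : Multiset β) :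
    ∑ x ∈ s, M.countP (P x) = (M.map fun b => #{x ∈ s | P x b}).sum := by
  induction M using Multiset.induction with
  | empty => simp
  | cons b M ih =>
    simp only [countP_cons, sum_add_distrib, ih, map_cons, sum_cons, ← card_filter]
    ring

theorem choose_countP_le_countP_powersetCard (p : α → Prop) [DecidablePred p]
    [DecidablePred fun S : Multiset α => ∀ a ∈ S, p a] (n : ℕ) (M : Multiset α) :
    (M.countP p).choose n ≤ (M.powersetCard n).countP (fun S => ∀ a ∈ S, p a) := by
  rw [countP_eq_card_filter, countP_eq_card_filter, ← card_powersetCard]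
  refine card_le_card (le_filter.mpr ⟨powersetCard_mono n (filter_le p M), fun S hS a ha => ?_⟩)
  exact of_mem_filter (mem_of_le (mem_powersetCard.mp hS).1 ha)

end Multiset

section Packing

variable {α : Type*} [Fintype α] [DecidableEq α] {B : Multiset (Finset α)} {t lam : ℕ}

theorem card_common_points_le_of_packing
    (hB : ∀ T : Finset α, #T = t → B.countP (T ⊆ ·) ≤ lam)
    {S : Multiset (Finset α)} (hS : S ∈ B.powersetCard (lam + 1)) :
    #{x | ∀ b ∈ S, x ∈ b} ≤ t - 1 := by
  obtain ⟨hSB, hScard⟩ := Multiset.mem_powersetCard.mp hS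
  by_contra! hlarge
  obtain ⟨T, hT, hTcard⟩ := exists_subset_card_eq (show t ≤ #{x | ∀ b ∈ S, x ∈ b} by omega)
  have hTS : ∀ b ∈ S, T ⊆ b := fun b hb x hx => (mem_filter.mp (hT hx)).2 b hb
  have : lam + 1 ≤ B.countP (T ⊆ ·) := by
    rw [← hScard, ← Multiset.countP_eq_card.mpr hTS]
    exact Multiset.countP_le_of_le _ hSB
  have := hB T hTcard
  omega

theorem sum_choose_countP_mem_le_of_packing
    (hB : ∀ T : Finset α, #T = t → B.countP (T ⊆ ·) ≤ lam) :
    ∑ x, (B.countP (x ∈ ·)).choose (lam + 1) ≤ (t - 1) * (Multiset.card B).choose (lam + 1) :=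
  calc ∑ x, (B.countP (x ∈ ·)).choose (lam + 1)
      ≤ ∑ x, (B.powersetCard (lam + 1)).countP (fun S => ∀ b ∈ S, x ∈ b) :=
        sum_le_sum fun x _ => Multiset.choose_countP_le_countP_powersetCard _ _ B
    _ = ((B.powersetCard (lam + 1)).map fun S => #{x | ∀ b ∈ S, x ∈ b}).sum :=
        Multiset.sum_countP_eq_sum_map_card_filter _ (fun x S => ∀ b ∈ S, x ∈ b) _
    _ ≤ ((B.powersetCard (lam + 1)).map fun _ => t - 1).sum :=
        Multiset.sum_map_le_sum_map _ _ fun S hS => card_common_points_le_of_packing hB hS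
    _ = (t - 1) * (Multiset.card B).choose (lam + 1) := by simp [mul_comm]

theorem sum_countP_mem_eq_card_mul {k : ℕ} (hB : ∀ b ∈ B, #b = k) :
    ∑ x, B.countP (x ∈ ·) = Multiset.card B * k := by
  rw [Multiset.sum_countP_eq_sum_map_card_filter _ (fun x b => x ∈ b)]
  simp [Multiset.map_congr rfl hB]

end Packing

theorem stmt6_general (v k t lam d q r : ℕ)
    (hq : d * k = q * v + r)
    (B : Multiset (Finset (Fin v))) (hB : IsPD v k t lam B) (hd : Multiset.card B = d) :
    v * q.choose (lam + 1) + r * q.choose lam ≤ (t - 1) * d.choose (lam + 1) := by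
  obtain ⟨hcard, hpack⟩ := hB
  subst hd
  have hfreq : ∑ x, freq B x = q * #(univ : Finset (Fin v)) + r :=
    (sum_countP_mem_eq_card_mul hcard).trans (by rw [hq, card_univ, Fintype.card_fin])
  calc v * q.choose (lam + 1) + r * q.choose lam
      ≤ ∑ x, (freq B x).choose (lam + 1) := by
        simpa using card_mul_choose_add_le_sum_choose univ (freq B) lam hfreq
    _ ≤ (t - 1) * (Multiset.card B).choose (lam + 1) :=
        sum_choose_countP_mem_le_of_packing hpack

theorem stmt6 (v k t lam d q r : ℕ) (ht : 2 ≤ t) (htk : t ≤ k) (hkv : k ≤ v) (hlam : 1 ≤ lam)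
    (hq : d * k = q * v + r) (hr : r < v)
    (B : Multiset (Finset (Fin v))) (hB : IsPD v k t lam B) (hd : Multiset.card B = d) :
    v * q.choose (lam + 1) + r * q.choose lam ≤ (t - 1) * d.choose (lam + 1) :=
  stmt6_general v k t lam d q r hq B hB hd
end

section
/- For any integers v ≥ k ≥ t ≥ 1 and n ≥ 0, there exists a packing design PD_{⌈nk/v⌉}(v,k,t) with exactly n blocks in which every point has frequency either ⌊nk/v⌋ or ⌈nk/v⌉. -/
/-!
Wrap the blocks around the cycle of residues mod `v`: block `i` is
`{i k, i k + 1, …, i k + k - 1}` mod `v`, which has `k` distinct points because `k ≤ v`.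
The `n` blocks then cover the integers `0, …, n k - 1` exactly once each, so the frequency
of `x` is the number of `m < n k` with `m ≡ x [MOD v]`, namely `⌊n k / v⌋`, plus one when
`x < n k % v`. A nonempty `t`-set lies in at most as many blocks as any one of its points,
so `λ = ⌈n k / v⌉` suffices.
-/

open scoped Classical

open Finset

lemma Finset.card_filter_apply_eq_of_injOn {α β : Type*} [DecidableEq β] {s : Finset α}
    {f : α → β} (hf : Set.InjOn f s) (y : β) :
    #(s.filter (f · = y)) = if y ∈ s.image f then 1 else 0 := by
  rw [← card_image_of_injOn (hf.mono (filter_subset _ s)), ← filter_image (p := (· = y)),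
    filter_eq']
  split_ifs <;> simp

lemma Nat.ceilDiv_eq_div_add_one {a b : ℕ} (hb : 0 < b) (h : a % b ≠ 0) :
    a ⌈/⌉ b = a / b + 1 := by
  have hab : a + b - 1 = b * (a / b + 1) + (a % b - 1) := by
    have := Nat.div_add_mod a b
    rw [Nat.mul_add_one]
    omega
  rw [Nat.ceilDiv_eq_add_pred_div, hab, Nat.mul_add_div hb,
    Nat.div_eq_of_lt (a := a % b - 1) (by have := Nat.mod_lt a hb; omega), add_zero]

lemma Fin.ofNat_eq_iff_modEq {v : ℕ} [NeZero v] (a : ℕ) (x : Fin v) :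
    Fin.ofNat v a = x ↔ a ≡ x [MOD v] := by
  rw [Fin.ext_iff, Fin.val_ofNat, Nat.ModEq, Nat.mod_eq_of_lt x.isLt]

lemma countP_subset_le_freq {v : ℕ} (B : Multiset (Finset (Fin v))) {T : Finset (Fin v)}
    {y : Fin v} (hy : y ∈ T) : B.countP (fun b => T ⊆ b) ≤ freq B y := by
  rw [freq, Multiset.countP_eq_card_filter, Multiset.countP_eq_card_filter]
  exact Multiset.card_le_card (Multiset.monotone_filter_right B fun b hb => hb hy)

lemma isPD_of_freq_le {v k t lam : ℕ} {B : Multiset (Finset (Fin v))}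
    (hB : ∀ b ∈ B, b.card = k) (ht : 1 ≤ t) (hfreq : ∀ x, freq B x ≤ lam) :
    IsPD v k t lam B := by
  refine ⟨hB, fun T hT => ?_⟩
  obtain ⟨y, hy⟩ := Finset.card_pos.mp (show 0 < T.card by omega)
  exact (countP_subset_le_freq B hy).trans (hfreq y)

section Cyclic

variable (v k : ℕ) [NeZero v]

def cyclicBlock (i : ℕ) : Finset (Fin v) :=
  (range k).image fun j => Fin.ofNat v (i * k + j)

def cyclicPacking (n : ℕ) : Multiset (Finset (Fin v)) :=
  (Multiset.range n).map (cyclicBlock v k)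

variable {v k}

lemma injOn_ofNat_add (hkv : k ≤ v) (a : ℕ) :
    Set.InjOn (fun j => Fin.ofNat v (a + j)) (range k) := by
  intro j₁ hj₁ j₂ hj₂ h
  simp only [coe_range, Set.mem_Iio] at hj₁ hj₂
  have hmod : j₁ ≡ j₂ [MOD v] :=
    Nat.ModEq.add_left_cancel' a (by simpa only [Fin.ext_iff, Fin.val_ofNat, Nat.ModEq] using h)
  rwa [Nat.ModEq, Nat.mod_eq_of_lt (by omega), Nat.mod_eq_of_lt (by omega)] at hmod

lemma card_cyclicBlock (hkv : k ≤ v) (i : ℕ) : (cyclicBlock v k i).card = k := by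
  rw [cyclicBlock, card_image_of_injOn (injOn_ofNat_add hkv _), card_range]

lemma count_modEq_cyclicBlock (hkv : k ≤ v) (i : ℕ) (x : Fin v) :
    Nat.count (fun j => i * k + j ≡ x [MOD v]) k = if x ∈ cyclicBlock v k i then 1 else 0 := by
  simp only [Nat.count_eq_card_filter_range, ← Fin.ofNat_eq_iff_modEq]
  exact card_filter_apply_eq_of_injOn (injOn_ofNat_add hkv _) x

lemma freq_cyclicPacking (hkv : k ≤ v) (n : ℕ) (x : Fin v) :
    freq (cyclicPacking v k n) x = Nat.count (· ≡ x [MOD v]) (n * k) := by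
  induction n with
  | zero => simp [freq, cyclicPacking]
  | succ n ih =>
    rw [add_one_mul, Nat.count_add, count_modEq_cyclicBlock hkv n x, ← ih]
    simp only [freq, cyclicPacking, Multiset.range_succ, Multiset.map_cons, Multiset.countP_cons]

lemma card_of_mem_cyclicPacking (hkv : k ≤ v) {n : ℕ} :
    ∀ b ∈ cyclicPacking v k n, b.card = k := by
  intro b hb
  obtain ⟨i, -, rfl⟩ := Multiset.mem_map.mp hb
  exact card_cyclicBlock hkv i

lemma freq_cyclicPacking_eq_div_or_ceilDiv (hkv : k ≤ v) (n : ℕ) (x : Fin v) :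
    freq (cyclicPacking v k n) x = n * k / v ∨
      freq (cyclicPacking v k n) x = (n * k) ⌈/⌉ v := by
  rw [freq_cyclicPacking hkv, Nat.count_modEq_card _ (NeZero.pos v)]
  split_ifs with hx
  · exact Or.inr (Nat.ceilDiv_eq_div_add_one (NeZero.pos v) (by omega)).symm
  · exact Or.inl (add_zero _)

lemma freq_cyclicPacking_le (hkv : k ≤ v) (n : ℕ) (x : Fin v) :
    freq (cyclicPacking v k n) x ≤ (n * k) ⌈/⌉ v := by
  rcases freq_cyclicPacking_eq_div_or_ceilDiv hkv n x with h | h <;> rw [h]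
  exact floorDiv_le_ceilDiv (α := ℕ)

end Cyclic

theorem stmt7 (v k t n : ℕ) (ht : 1 ≤ t) (htk : t ≤ k) (hkv : k ≤ v) :
    ∃ B : Multiset (Finset (Fin v)),
      IsPD v k t ((n * k) ⌈/⌉ v) B ∧ Multiset.card B = n ∧
      ∀ x : Fin v, freq B x = n * k / v ∨ freq B x = (n * k) ⌈/⌉ v := by
  have : NeZero v := ⟨by omega⟩
  exact ⟨cyclicPacking v k n,
    isPD_of_freq_le (card_of_mem_cyclicPacking hkv) ht (freq_cyclicPacking_le hkv n),
    by simp [cyclicPacking], freq_cyclicPacking_eq_div_or_ceilDiv hkv n⟩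
end

section
/- Let v ≥ k ≥ t ≥ 2, λ ≥ 1 and n ≥ 1 be integers. If k ≥ (t-1)·C(n-1, λ) and λ·v ≥ n·k - (t-1)·C(n, λ+1), then there exists a packing design PD_λ(v,k,t) with exactly n blocks in which every point has frequency at most λ+1. -/
/-!
The design is built dually, by prescribing for every point its type: the set of blocks through it.
Every (λ+1)-subset of the n blocks is the type of exactly t - 1 points, which puts
(t - 1)·C(n-1, λ) points on each block. The remaining d = k - (t - 1)·C(n-1, λ) incidences per
block come from points whose types have at most λ elements: cut the sequence 0, …, n-1, repeated
d times, into consecutive runs of length min(λ, n). The hypothesis on λv (via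
n·C(n-1, λ) = (λ+1)·C(n, λ+1)) says there are enough points. A t-set of points lying in λ+1
common blocks would consist of points all of one (λ+1)-type, of which there are only t - 1.
-/

open scoped Classical

open Finset

lemma Multiset.exists_univ_map_eq {α : Type*} {v : ℕ} (s : Multiset α) (hs : card s = v) :
    ∃ f : Fin v → α, univ.val.map f = s := by
  obtain ⟨l, rfl⟩ : ∃ l : List α, (l : Multiset α) = s := Quot.exists_rep s
  rw [Multiset.coe_card] at hs
  subst hs
  exact ⟨l.get, by rw [Fin.univ_val_map, List.ofFn_get]⟩

lemma Nat.eq_of_div_eq_of_mod_eq {a b c n : ℕ} (hc : 0 < c) (hcn : c ≤ n)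
    (hdiv : a / c = b / c) (hmod : a % n = b % n) : a = b := by
  wlog hab : a ≤ b generalizing a b
  · exact (this hdiv.symm hmod.symm (by omega)).symm
  have ha := Nat.div_add_mod a c
  have hb := Nat.div_add_mod b c
  have := Nat.mod_lt a hc
  have := Nat.mod_lt b hc
  have hlt : b - a < n := by rw [hdiv] at ha; omega
  have hdvd : n ∣ b - a := Nat.dvd_of_mod_eq_zero (Nat.sub_mod_eq_zero_of_mod_eq hmod.symm)
  have := Nat.eq_zero_of_dvd_of_lt hdvd hlt
  omega

lemma card_filter_mod_eq_range_mul {n : ℕ} (d : ℕ) {i : ℕ} (hi : i < n) :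
    #{j ∈ range (n * d) | j % n = i} = d := by
  have hn : 0 < n := hi.trans_le' (Nat.zero_le _)
  have h := Nat.count_modEq_card (n * d) hn i
  rw [Nat.mul_div_cancel_left d hn, Nat.mul_mod_right, if_neg (Nat.not_lt_zero _), add_zero,
    Nat.count_eq_card_filter_range] at h
  simpa only [Nat.ModEq, Nat.mod_eq_of_lt hi] using h

section Incidence

variable {v n : ℕ} (g : Fin v → Finset (Fin n))

/-- `g x` is the set of blocks through the point `x`. -/
def dualBlocks : Multiset (Finset (Fin v)) :=
  univ.val.map fun i : Fin n => ({x | i ∈ g x} : Finset (Fin v))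

lemma card_dualBlocks : Multiset.card (dualBlocks g) = n := by
  simp [dualBlocks]

lemma freq_dualBlocks (x : Fin v) : freq (dualBlocks g) x = (g x).card := by
  rw [freq, dualBlocks, Multiset.countP_map, ← filter_val, card_val]
  simp

lemma countP_subset_dualBlocks (T : Finset (Fin v)) :
    (dualBlocks g).countP (T ⊆ ·) = #{i | ∀ x ∈ T, i ∈ g x} := by
  rw [dualBlocks, Multiset.countP_map, ← filter_val, card_val]
  simp [subset_iff]

theorem isPD_dualBlocks {k t lam : ℕ} (hdeg : ∀ i, #{x | i ∈ g x} = k)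
    (hsize : ∀ x, (g x).card ≤ lam + 1)
    (hmult : ∀ S : Finset (Fin n), S.card = lam + 1 → #{x | g x = S} < t) :
    IsPD v k t lam (dualBlocks g) := by
  refine ⟨?_, fun T hT => ?_⟩
  · simp only [dualBlocks, Multiset.mem_map]
    rintro _ ⟨i, -, rfl⟩
    exact hdeg i
  · rw [countP_subset_dualBlocks]
    by_contra! h
    obtain ⟨S, hS, hScard⟩ := exists_subset_card_eq h
    have hTS : T ⊆ ({x | g x = S} : Finset (Fin v)) := fun x hx =>
      mem_filter.2 ⟨mem_univ x, (eq_of_subset_of_card_le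
        (fun i hi => (mem_filter.1 (hS hi)).2 x hx) (hScard ▸ hsize x)).symm⟩
    exact (hmult S hScard).not_ge (hT ▸ card_le_card hTS)

end Incidence

theorem exists_isPD_of_pointTypes {v n k t lam : ℕ} (P : Multiset (Finset (Fin n)))
    (hcard : Multiset.card P ≤ v) (hdeg : ∀ i, P.countP (i ∈ ·) = k)
    (hsize : ∀ s ∈ P, s.card ≤ lam + 1)
    (hmult : ∀ S : Finset (Fin n), S.card = lam + 1 → P.count S < t) :
    ∃ B, IsPD v k t lam B ∧ Multiset.card B = n ∧ ∀ x, freq B x ≤ lam + 1 := by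
  obtain ⟨g, hg⟩ := Multiset.exists_univ_map_eq (v := v)
    (P + Multiset.replicate (v - Multiset.card P) ∅)
    (by simp only [Multiset.card_add, Multiset.card_replicate]; omega)
  have hsize' : ∀ x, (g x).card ≤ lam + 1 := by
    intro x
    have hx : g x ∈ P + Multiset.replicate (v - Multiset.card P) ∅ :=
      hg ▸ Multiset.mem_map_of_mem g (mem_univ x)
    rcases Multiset.mem_add.1 hx with hx | hx
    · exact hsize _ hx
    · simp [Multiset.eq_of_mem_replicate hx]
  refine ⟨dualBlocks g, isPD_dualBlocks g (fun i => ?_) hsize' (fun S hS => ?_),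
    card_dualBlocks g, fun x => freq_dualBlocks g x ▸ hsize' x⟩
  · rw [← card_val, filter_val, ← Multiset.countP_map g univ.val (i ∈ ·), hg,
      Multiset.countP_add, hdeg, Multiset.countP_eq_zero.2, add_zero]
    simp +contextual [Multiset.mem_replicate]
  · have hne : S ≠ ∅ := by rintro rfl; simp at hS
    rw [← card_val, filter_val]
    simp_rw [eq_comm (a := g _)]
    rw [← Multiset.count_map, hg, Multiset.count_add, Multiset.count_replicate, if_neg hne.symm,
      add_zero]
    exact hmult S hS

lemma exists_cyclic_cover {n c : ℕ} (hc : 0 < c) (hcn : c ≤ n) (d : ℕ) :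
    ∃ Q : Multiset (Finset (Fin n)), (∀ s ∈ Q, s.card ≤ c) ∧
      (∀ i, Q.countP (i ∈ ·) = d) ∧ c * Multiset.card Q < n * d + c := by
  let res : ℕ → Fin n := fun j => ⟨j % n, Nat.mod_lt j (hc.trans_le hcn)⟩
  let chunk : ℕ → Finset (Fin n) := fun q => {j ∈ range (n * d) | j / c = q}.image res
  let m := (n * d + (c - 1)) / c
  refine ⟨(Multiset.range m).map chunk, ?_, fun i => ?_, ?_⟩
  · simp only [Multiset.forall_mem_map_iff]
    intro q _
    calc (chunk q).card ≤ #{j ∈ range (n * d) | j / c = q} := card_image_le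
      _ ≤ #(Ico (q * c) (q * c + c)) := card_le_card fun j hj => by
          rw [mem_filter] at hj
          rw [mem_Ico, ← hj.2]
          exact ⟨Nat.div_mul_le_self j c, Nat.lt_div_mul_add hc⟩
      _ = c := by simp
  · rw [Multiset.countP_map, ← range_val, ← filter_val, card_val,
      ← card_filter_mod_eq_range_mul d i.isLt]
    symm
    refine card_bij (fun j _ => j / c) (fun j hj => ?_) (fun j₁ hj₁ j₂ hj₂ h => ?_)
      fun q hq => ?_
    · rw [mem_filter, mem_range] at hj ⊢
      refine ⟨?_, mem_image.2 ⟨j, mem_filter.2 ⟨mem_range.2 hj.1, rfl⟩, Fin.ext hj.2⟩⟩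
      rw [Nat.lt_iff_add_one_le, ← Nat.add_div_right j hc]
      exact Nat.div_le_div_right (by omega)
    · rw [mem_filter] at hj₁ hj₂
      exact Nat.eq_of_div_eq_of_mod_eq hc hcn h (hj₁.2.trans hj₂.2.symm)
    · obtain ⟨j, hj, hji⟩ := mem_image.1 (mem_filter.1 hq).2
      rw [mem_filter] at hj
      exact ⟨j, mem_filter.2 ⟨hj.1, congrArg Fin.val hji⟩, hj.2⟩
  · rw [Multiset.card_map, Multiset.card_range]
    have := Nat.mul_div_le (n * d + (c - 1)) c
    change c * ((n * d + (c - 1)) / c) < n * d + c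
    omega

lemma countP_mem_powersetCard_univ {n : ℕ} (r : ℕ) (i : Fin n) :
    (powersetCard (r + 1) (univ : Finset (Fin n))).val.countP (i ∈ ·) = (n - 1).choose r := by
  rw [Multiset.countP_eq_card_filter, ← filter_val, card_val]
  simp_rw [← singleton_subset_iff]
  rw [card_filter_powersetCard_subset _ _ _ (subset_univ _) (by simp)]
  simp

lemma point_count_bound {v k t lam n : ℕ} (ht : 1 ≤ t) (hn : 1 ≤ n) (hkv : k ≤ v)
    (hk : (t - 1) * (n - 1).choose lam ≤ k)
    (hv : (n * k : ℤ) - (t - 1) * n.choose (lam + 1) ≤ lam * v) :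
    n * (k - (t - 1) * (n - 1).choose lam) + min lam n * ((t - 1) * n.choose (lam + 1))
      ≤ min lam n * v := by
  rcases le_or_gt n lam with h | h
  · rw [min_eq_right h, Nat.choose_eq_zero_of_lt (by omega : n < lam + 1),
      Nat.choose_eq_zero_of_lt (by omega : n - 1 < lam)]
    simpa using Nat.mul_le_mul_left n hkv
  · rw [min_eq_left h.le]
    have hpascal : (n : ℤ) * (n - 1).choose lam = (lam + 1) * n.choose (lam + 1) := by
      have := Nat.add_one_mul_choose_eq (n - 1) lam
      rw [Nat.sub_add_cancel (by omega)] at this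
      exact_mod_cast this.trans (mul_comm _ _)
    zify [hk, ht]
    linear_combination hv - ((t : ℤ) - 1) * hpascal

theorem stmt8_general (v k t lam n : ℕ) (ht : 2 ≤ t) (hkv : k ≤ v) (hlam : 1 ≤ lam)
    (hn : 1 ≤ n)
    (hk : (t - 1) * (n - 1).choose lam ≤ k)
    (hv : (n * k : ℤ) - (t - 1) * (n.choose (lam + 1)) ≤ lam * v) :
    ∃ B : Multiset (Finset (Fin v)),
      IsPD v k t lam B ∧ Multiset.card B = n ∧ ∀ x : Fin v, freq B x ≤ lam + 1 := by
  have hbound := point_count_bound (by omega) hn hkv hk hv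
  obtain ⟨Q, hQsize, hQdeg, hQcard⟩ :=
    exists_cyclic_cover (by omega) (min_le_right lam n) (k - (t - 1) * (n - 1).choose lam)
  refine exists_isPD_of_pointTypes ((t - 1) • (powersetCard (lam + 1) univ).val + Q)
    ?_ (fun i => ?_) (fun s hs => ?_) (fun S hS => ?_)
  · rw [Multiset.card_add, Multiset.card_nsmul, card_val, card_powersetCard, card_univ,
      Fintype.card_fin]
    refine Nat.le_of_lt_succ (Nat.lt_of_mul_lt_mul_left (a := min lam n) ?_)
    rw [mul_add, Nat.mul_succ]
    omega
  · rw [Multiset.countP_add, Multiset.countP_nsmul, countP_mem_powersetCard_univ, hQdeg]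
    omega
  · rcases Multiset.mem_add.1 hs with hs | hs
    · exact (mem_powersetCard.1 (Multiset.mem_of_mem_nsmul hs)).2.le
    · exact (hQsize s hs).trans (by omega)
  · have hSQ : S ∉ Q := fun h => by have := hQsize S h; omega
    rw [Multiset.count_add, Multiset.count_nsmul, Multiset.count_eq_zero.2 hSQ,
      Multiset.count_eq_one_of_mem (nodup _) (mem_powersetCard.2 ⟨subset_univ _, hS⟩)]
    omega

theorem stmt8 (v k t lam n : ℕ) (ht : 2 ≤ t) (htk : t ≤ k) (hkv : k ≤ v) (hlam : 1 ≤ lam)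
    (hn : 1 ≤ n)
    (hk : (t - 1) * (n - 1).choose lam ≤ k)
    (hv : (n * k : ℤ) - (t - 1) * (n.choose (lam + 1)) ≤ lam * v) :
    ∃ B : Multiset (Finset (Fin v)),
      IsPD v k t lam B ∧ Multiset.card B = n ∧ ∀ x : Fin v, freq B x ≤ lam + 1 :=
  stmt8_general v k t lam n ht hkv hlam hn hk hv
end

section
/- Let v ≥ k ≥ t ≥ 2, λ ≥ 1 and n ≥ 1 be integers satisfying n·k - (t-1)·C(n, λ+1) ≤ λ·v < (n+1)·k - (t-1)·C(n+1, λ+1). Then the packing number PDN_λ(v,k,t) equals n; that is, a PD_λ(v,k,t) with n blocks exists but no PD_λ(v,k,t) with n+1 blocks exists. -/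
open scoped Classical

/-- The packing number PDN_λ(v,k,t): the maximum number of blocks of a PD_λ(v,k,t). -/
noncomputable def PDN (v k t lam : ℕ) : ℕ :=
  sSup {n | ∃ B : Multiset (Finset (Fin v)), IsPD v k t lam B ∧ Multiset.card B = n}

/-!
Upper bound: in a packing with `N` blocks, any `λ + 1` blocks share at most `t - 1` points.
Counting pairs (point `x`, `λ + 1` blocks through `x`) therefore gives
`∑ₓ C(dₓ, λ + 1) ≤ (t - 1) C(N, λ + 1)`, where `dₓ` is the number of blocks through `x`.
Since `d ≤ λ + C(d, λ + 1)`, summing over the points yields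
`N k = ∑ₓ dₓ ≤ λ v + (t - 1) C(N, λ + 1)`, which the second hypothesis forbids for
`N = n + 1`.

Construction with `n` blocks and `m = t - 1`: for every `(λ + 1)`-set `S` of blocks take `m`
points lying in exactly the blocks of `S`; no `t` points then share `λ + 1` blocks. Each block
gets `m C(n - 1, λ)` such points and is completed by `k - m C(n - 1, λ)` of the remaining points,
which are distributed cyclically so that each of them lies in at most `λ` blocks. The first
hypothesis guarantees that there are enough remaining points for this.
-/

open Finset

theorem Nat.le_add_choose_succ (l m : ℕ) : m ≤ l + m.choose (l + 1) := by
  induction m with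
  | zero => simp
  | succ m ih =>
    rcases Nat.lt_or_ge m l with hml | hlm
    · omega
    · have := Nat.choose_pos hlm
      rw [Nat.choose_succ_succ']
      omega

lemma Multiset.exists_fin_map_eq {α : Type*} (B : Multiset α) :
    ∃ (N : ℕ) (f : Fin N → α), univ.val.map f = B :=
  ⟨_, B.toList.get, by rw [Fin.univ_val_map, List.ofFn_get, Multiset.coe_toList]⟩

lemma Multiset.exists_le_card_eq {α : Type*} {s : Multiset α} {n : ℕ} (h : n ≤ card s) :
    ∃ t ≤ s, card t = n := by
  have : 0 < card (powersetCard n s) := by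
    rw [card_powersetCard]
    exact Nat.choose_pos h
  obtain ⟨t, ht⟩ := card_pos_iff_exists_mem.1 this
  exact ⟨t, mem_powersetCard.1 ht⟩

lemma Finset.card_filter_sumElim {α β γ : Type*} [Fintype α] [Fintype β] (f : α → γ)
    (g : β → γ) (p : γ → Prop) [DecidablePred p] :
    #{y | p (Sum.elim f g y)} = #{a | p (f a)} + #{b | p (g b)} := by
  simp only [card_filter, Fintype.sum_sum_type, Sum.elim_inl, Sum.elim_inr]
  rfl

lemma Finset.card_filter_fst {α β : Type*} [Fintype α] [Fintype β] (p : α → Prop)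
    [DecidablePred p] : #{x : α × β | p x.1} = #{a | p a} * Fintype.card β := by
  rw [← univ_product_univ, filter_product_left, card_product, card_univ]

lemma card_filter_mem_finset_len {n : ℕ} (l : ℕ) (i : Fin n) :
    #{S : {S : Finset (Fin n) // #S = l + 1} | i ∈ S.1} = (n - 1).choose l := by
  rw [← Fintype.card_subtype, Fintype.card_congr (Equiv.subtypeSubtypeEquivSubtypeInter
    (fun S : Finset (Fin n) => #S = l + 1) (i ∈ ·)), Fintype.card_subtype]
  have := card_filter_powersetCard_subset {i} (univ : Finset (Fin n)) (l + 1) (by simp) (by simp)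
  simp only [card_singleton, card_univ, Fintype.card_fin, add_tsub_cancel_right] at this
  rw [← this]
  congr 1
  ext S
  simp

lemma isPD_map_iff {v k t lam N : ℕ} (f : Fin N → Finset (Fin v)) :
    IsPD v k t lam (univ.val.map f) ↔
      (∀ i, #(f i) = k) ∧ ∀ T : Finset (Fin v), #T = t → #{i | T ⊆ f i} ≤ lam := by
  simp only [IsPD, Multiset.mem_map, mem_val, mem_univ, true_and, forall_exists_index,
    forall_apply_eq_imp_iff, Multiset.countP_map]
  rfl

section Family

variable {v k t lam N : ℕ} {f : Fin N → Finset (Fin v)}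

lemma card_inf_lt (hT : ∀ T : Finset (Fin v), #T = t → #{i | T ⊆ f i} ≤ lam)
    {S : Finset (Fin N)} (hS : #S = lam + 1) : #(S.inf f) < t := by
  by_contra! h
  obtain ⟨T, hTS, hTcard⟩ := exists_subset_card_eq h
  have hST : S ⊆ ({i | T ⊆ f i} : Finset (Fin N)) :=
    fun i hi => mem_filter.2 ⟨mem_univ i, hTS.trans (inf_le hi)⟩
  have := (card_le_card hST).trans (hT T hTcard)
  omega

lemma sum_choose_card_filter_mem_le
    (hT : ∀ T : Finset (Fin v), #T = t → #{i | T ⊆ f i} ≤ lam) :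
    ∑ x : Fin v, (#{i | x ∈ f i}).choose (lam + 1) ≤ (t - 1) * N.choose (lam + 1) := by
  have hdouble := sum_card_bipartiteAbove_eq_sum_card_bipartiteBelow
    (s := univ) (t := (univ : Finset (Fin N)).powersetCard (lam + 1))
    (fun (x : Fin v) (S : Finset (Fin N)) => x ∈ S.inf f)
  have habove : ∀ x : Fin v, ((univ : Finset (Fin N)).powersetCard (lam + 1)).bipartiteAbove
      (fun x S => x ∈ S.inf f) x = powersetCard (lam + 1) {i | x ∈ f i} := by
    intro x
    ext S
    simp [bipartiteAbove, mem_inf, subset_iff, and_comm]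
  simp only [habove, card_powersetCard, bipartiteBelow, filter_univ_mem] at hdouble
  rw [hdouble]
  calc _ ≤ ∑ _S ∈ (univ : Finset (Fin N)).powersetCard (lam + 1), (t - 1) :=
        sum_le_sum fun S hS =>
          Nat.le_sub_one_of_lt (card_inf_lt hT (mem_powersetCard.1 hS).2)
    _ = (t - 1) * N.choose (lam + 1) := by
        rw [sum_const, card_powersetCard, card_univ, Fintype.card_fin, smul_eq_mul, mul_comm]

theorem card_mul_le_of_family (hk : ∀ i, #(f i) = k)
    (hT : ∀ T : Finset (Fin v), #T = t → #{i | T ⊆ f i} ≤ lam) :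
    N * k ≤ lam * v + (t - 1) * N.choose (lam + 1) := by
  have hdeg : ∑ x : Fin v, #{i | x ∈ f i} = N * k := by
    have := sum_card_bipartiteAbove_eq_sum_card_bipartiteBelow (s := univ) (t := univ)
      (fun (x : Fin v) (i : Fin N) => x ∈ f i)
    simpa only [bipartiteAbove, bipartiteBelow, filter_univ_mem, hk, sum_const, card_univ,
      Fintype.card_fin, smul_eq_mul] using this
  calc N * k = ∑ x : Fin v, #{i | x ∈ f i} := hdeg.symm
    _ ≤ ∑ x : Fin v, (lam + (#{i | x ∈ f i}).choose (lam + 1)) :=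
      sum_le_sum fun x _ => Nat.le_add_choose_succ _ _
    _ ≤ lam * v + (t - 1) * N.choose (lam + 1) := by
      rw [sum_add_distrib, sum_const, card_univ, Fintype.card_fin, smul_eq_mul, mul_comm]
      have := sum_choose_card_filter_mem_le hT
      omega

end Family

theorem IsPD.card_mul_le {v k t lam : ℕ} {B : Multiset (Finset (Fin v))}
    (hB : IsPD v k t lam B) :
    Multiset.card B * k ≤ lam * v + (t - 1) * (Multiset.card B).choose (lam + 1) := by
  obtain ⟨N, f, rfl⟩ := B.exists_fin_map_eq
  obtain ⟨hk, hT⟩ := (isPD_map_iff f).1 hB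
  simpa using card_mul_le_of_family hk hT

lemma IsPD.mono {v k t lam : ℕ} {B B' : Multiset (Finset (Fin v))} (hB : IsPD v k t lam B)
    (h : B' ≤ B) : IsPD v k t lam B' :=
  ⟨fun b hb => hB.1 b (Multiset.mem_of_le h hb),
    fun T hT => (Multiset.countP_le_of_le _ h).trans (hB.2 T hT)⟩

theorem PDN_eq {v k t lam n : ℕ}
    (hex : ∃ B : Multiset (Finset (Fin v)), IsPD v k t lam B ∧ Multiset.card B = n)
    (hnon : ¬ ∃ B : Multiset (Finset (Fin v)), IsPD v k t lam B ∧ Multiset.card B = n + 1) :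
    PDN v k t lam = n := by
  refine IsGreatest.csSup_eq ⟨hex, ?_⟩
  rintro N ⟨B, hB, rfl⟩
  by_contra! hN
  obtain ⟨B', hle, hcard⟩ := Multiset.exists_le_card_eq (s := B) (n := n + 1) hN
  exact hnon ⟨B', hB.mono hle, hcard⟩

theorem exists_family_card_eq_of_mul_le {n r P lam : ℕ} (hrP : r ≤ P) (h : n * r ≤ lam * P) :
    ∃ F : Fin n → Finset (Fin P), (∀ i, #(F i) = r) ∧ ∀ p, #{i | p ∈ F i} ≤ lam := by
  rcases Nat.eq_zero_or_pos P with rfl | hP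
  · exact ⟨fun _ => ∅, fun i => by simp; omega, fun p => p.elim0⟩
  have : NeZero P := ⟨hP.ne'⟩
  -- `F i` consists of the residues mod `P` of `r * i, …, r * i + r - 1`.
  let slot : Fin n × Fin r → Fin P := fun x => Fin.ofNat P (finProdFinEquiv x)
  refine ⟨fun i => univ.image fun j => slot (i, j), fun i => ?_, fun p => ?_⟩
  · rw [card_image_of_injective, card_univ, Fintype.card_fin]
    intro j₁ j₂ hj
    simp only [slot, Fin.ext_iff, Fin.val_ofNat, finProdFinEquiv_apply_val] at hj
    have := Nat.ModEq.add_right_cancel' _ hj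
    rw [Nat.ModEq, Nat.mod_eq_of_lt (by omega), Nat.mod_eq_of_lt (by omega)] at this
    exact Fin.ext this
  · calc #{i | p ∈ univ.image fun j => slot (i, j)} ≤ #{x | slot x = p} := by
          refine card_le_card_of_surjOn Prod.fst fun i hi => ?_
          obtain ⟨j, -, hj⟩ := mem_image.1 (mem_filter.1 hi).2
          exact ⟨(i, j), mem_filter.2 ⟨mem_univ _, hj⟩, rfl⟩
      _ ≤ #(range lam) := by
          refine card_le_card_of_injOn (fun x => finProdFinEquiv x / P) (fun x _ => ?_) ?_
          · have := (finProdFinEquiv x).isLt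
            exact mem_range.2 ((Nat.div_lt_iff_lt_mul hP).2 (by omega))
          · intro x hx y hy hxy
            simp only [coe_filter, mem_univ, true_and, Set.mem_ofPred_eq, slot, Fin.ext_iff,
              Fin.val_ofNat] at hx hy hxy
            apply finProdFinEquiv.injective
            rw [Fin.ext_iff, ← Nat.div_add_mod (finProdFinEquiv x : ℕ) P,
              ← Nat.div_add_mod (finProdFinEquiv y : ℕ) P, hxy, hx, hy]
      _ = lam := card_range lam

-- A point is given by the set of blocks containing it.
theorem exists_isPD_of_incidence {α : Type*} [Fintype α] {v k t lam n : ℕ}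
    (hα : Fintype.card α = v) (A : α → Finset (Fin n)) (hdeg : ∀ i, #{y | i ∈ A y} = k)
    (hS : ∀ S : Finset (Fin n), #S = lam + 1 → #{y | S ⊆ A y} < t) :
    ∃ B : Multiset (Finset (Fin v)), IsPD v k t lam B ∧ Multiset.card B = n := by
  let e := Fintype.equivFinOfCardEq hα
  let f : Fin n → Finset (Fin v) := fun i => ({y | i ∈ A y} : Finset α).map e.toEmbedding
  refine ⟨univ.val.map f, (isPD_map_iff f).2 ⟨fun i => by simp [f, hdeg], fun T hT => ?_⟩,
    by simp⟩
  by_contra! h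
  obtain ⟨S, hSsub, hScard⟩ := exists_subset_card_eq h
  have hTS : T.map e.symm.toEmbedding ⊆ ({y | S ⊆ A y} : Finset α) := by
    intro y hy
    refine mem_filter.2 ⟨mem_univ y, fun i hi => ?_⟩
    obtain ⟨x, hxT, rfl⟩ := mem_map.1 hy
    simpa [f] using (mem_filter.1 (hSsub hi)).2 hxT
  have := (card_le_card hTS).trans_lt (hS S hScard)
  rw [card_map, hT] at this
  exact this.false

section Incidence

variable {n P : ℕ} (lam m : ℕ) (F : Fin n → Finset (Fin P))

def packingIncidence :
    {S : Finset (Fin n) // #S = lam + 1} × Fin m ⊕ Fin P → Finset (Fin n) :=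
  Sum.elim (fun x => x.1.1) (fun p => ({i | p ∈ F i} : Finset (Fin n)))

lemma card_filter_mem_packingIncidence (i : Fin n) :
    #{y | i ∈ packingIncidence lam m F y} = m * (n - 1).choose lam + #(F i) := by
  rw [packingIncidence, card_filter_sumElim _ _ (i ∈ ·)]
  simp only [mem_filter, mem_univ, true_and, filter_mem_eq_inter, univ_inter]
  rw [card_filter_fst (fun S : {S : Finset (Fin n) // #S = lam + 1} => i ∈ S.1),
    card_filter_mem_finset_len, Fintype.card_fin, mul_comm]

lemma card_filter_subset_packingIncidence_le (hF : ∀ p, #{i | p ∈ F i} ≤ lam)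
    {S : Finset (Fin n)} (hS : #S = lam + 1) :
    #{y | S ⊆ packingIncidence lam m F y} ≤ m := by
  rw [packingIncidence, card_filter_sumElim _ _ (S ⊆ ·)]
  have hfiller : #{p : Fin P | S ⊆ ({i | p ∈ F i} : Finset (Fin n))} = 0 := by
    refine card_eq_zero.2 (filter_eq_empty_iff.2 fun p _ hSp => ?_)
    have := (card_le_card hSp).trans (hF p)
    omega
  rw [hfiller, add_zero]
  calc _ ≤ #(univ : Finset (Fin m)) := by
        refine card_le_card_of_injOn Prod.snd (fun _ _ => mem_coe.2 (mem_univ _)) ?_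
        intro x hx y hy hxy
        simp only [coe_filter, mem_univ, true_and, Set.mem_ofPred_eq] at hx hy
        have hxS := eq_of_subset_of_card_le hx (by rw [x.1.2, hS])
        have hyS := eq_of_subset_of_card_le hy (by rw [y.1.2, hS])
        exact Prod.ext (Subtype.ext (hxS.symm.trans hyS)) hxy
    _ = m := by simp

end Incidence

lemma add_mul_choose_succ_le {v k m lam n : ℕ} (hlam : 1 ≤ lam) (hkv : k ≤ v)
    (hmk : m * n.choose lam ≤ k) (h : n * k ≤ lam * v + m * n.choose (lam + 1)) :
    k + m * n.choose (lam + 1) ≤ v := by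
  rcases Nat.lt_or_ge n lam with hn | hn
  · rwa [Nat.choose_eq_zero_of_lt (by omega), mul_zero, add_zero]
  · have hpascal : (n - lam) * (m * n.choose lam) = (lam + 1) * (m * n.choose (lam + 1)) := by
      linear_combination m * (Nat.choose_succ_right_eq n lam).symm
    have hsplit : n * k = lam * k + (n - lam) * k := by
      rw [← add_mul, Nat.add_sub_cancel' hn]
    have := Nat.mul_le_mul_left (n - lam) hmk
    refine Nat.le_of_mul_le_mul_left ?_ hlam
    linarith

theorem exists_isPD_of_le {v k m lam n : ℕ} (hlam : 1 ≤ lam) (hkv : k ≤ v)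
    (hmk : m * n.choose lam ≤ k) (h : n * k ≤ lam * v + m * n.choose (lam + 1)) :
    ∃ B : Multiset (Finset (Fin v)), IsPD v k (m + 1) lam B ∧ Multiset.card B = n := by
  have hkc := add_mul_choose_succ_le hlam hkv hmk h
  set c := n.choose (lam + 1)
  set q := (n - 1).choose lam
  have hnq : n * q = (lam + 1) * c := by
    rcases n with _ | n
    · simp [q, c, Nat.choose_eq_zero_of_lt (by omega : 0 < lam)]
    · rw [mul_comm (lam + 1), show q = n.choose lam by simp [q]]
      exact Nat.add_one_mul_choose_eq n lam
  have hmq : m * q ≤ k := (Nat.mul_le_mul_left m (Nat.choose_le_choose lam (by omega))).trans hmk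
  have hfill : n * (k - m * q) ≤ lam * (v - m * c) := by
    have hz : (n * k : ℤ) ≤ lam * v + m * c := by exact_mod_cast h
    have hnqz : (n * q : ℤ) = (lam + 1) * c := by exact_mod_cast hnq
    zify [hmq, (by omega : m * c ≤ v)]
    linear_combination hz - m * hnqz
  obtain ⟨F, hFcard, hFdeg⟩ := exists_family_card_eq_of_mul_le (by omega) hfill
  refine exists_isPD_of_incidence ?_ (packingIncidence lam m F)
    (fun i => ?_)
    (fun S hS => Nat.lt_succ_of_le (card_filter_subset_packingIncidence_le lam m F hFdeg hS))
  · simp only [Fintype.card_sum, Fintype.card_prod, Fintype.card_finset_len, Fintype.card_fin]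
    rw [mul_comm]
    exact Nat.add_sub_of_le (show m * c ≤ v by omega)
  · rw [card_filter_mem_packingIncidence, hFcard]
    exact Nat.add_sub_of_le hmq

theorem stmt9_general (v k t lam n : ℕ) (ht : 2 ≤ t) (hkv : k ≤ v) (hlam : 1 ≤ lam)
    (h1 : (n * k : ℤ) - (t - 1) * (n.choose (lam + 1)) ≤ lam * v)
    (h2 : (lam * v : ℤ) < (n + 1) * k - (t - 1) * ((n + 1).choose (lam + 1))) :
    PDN v k t lam = n ∧
    (∃ B : Multiset (Finset (Fin v)), IsPD v k t lam B ∧ Multiset.card B = n) ∧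
    ¬ ∃ B : Multiset (Finset (Fin v)), IsPD v k t lam B ∧ Multiset.card B = n + 1 := by
  obtain ⟨m, rfl⟩ : ∃ m, t = m + 1 := ⟨t - 1, by omega⟩
  have hpascal : ((n + 1).choose (lam + 1) : ℤ) = n.choose lam + n.choose (lam + 1) := by
    exact_mod_cast Nat.choose_succ_succ' n lam
  push_cast [add_sub_cancel_right, hpascal] at h1 h2
  have hex : ∃ B : Multiset (Finset (Fin v)), IsPD v k (m + 1) lam B ∧ Multiset.card B = n := by
    refine exists_isPD_of_le hlam hkv ?_ ?_
    · have : (m * n.choose lam : ℤ) < k := by linarith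
      exact_mod_cast this.le
    · have : (n * k : ℤ) ≤ lam * v + m * n.choose (lam + 1) := by linarith
      exact_mod_cast this
  have hnon : ¬ ∃ B : Multiset (Finset (Fin v)), IsPD v k (m + 1) lam B ∧
      Multiset.card B = n + 1 := by
    rintro ⟨B, hB, hcard⟩
    have hbound := hB.card_mul_le
    rw [hcard, add_tsub_cancel_right] at hbound
    have : ((n + 1) * k : ℤ) ≤ lam * v + m * (n.choose lam + n.choose (lam + 1)) := by
      rw [← hpascal]
      exact_mod_cast hbound
    linarith
  exact ⟨PDN_eq hex hnon, hex, hnon⟩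

theorem stmt9 (v k t lam n : ℕ) (ht : 2 ≤ t) (htk : t ≤ k) (hkv : k ≤ v) (hlam : 1 ≤ lam)
    (hn : 1 ≤ n)
    (h1 : (n * k : ℤ) - (t - 1) * (n.choose (lam + 1)) ≤ lam * v)
    (h2 : (lam * v : ℤ) < (n + 1) * k - (t - 1) * ((n + 1).choose (lam + 1))) :
    PDN v k t lam = n ∧
    (∃ B : Multiset (Finset (Fin v)), IsPD v k t lam B ∧ Multiset.card B = n) ∧
    ¬ ∃ B : Multiset (Finset (Fin v)), IsPD v k t lam B ∧ Multiset.card B = n + 1 :=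
  stmt9_general v k t lam n ht hkv hlam h1 h2
end

section
/- Let (V, B) be a 2-fold packing design PD_2(v) with n blocks (blocks may have arbitrary sizes, including empty and repeated blocks) such that every point of V lies in at most 3 blocks. Then each block B of B can be ordered into a sequence T_B (a permutation of B) so that every ordered pair of distinct points of V appears as a subsequence of at most one of the sequences T_B. -/
/-!
Induction on the points. Delete a point `x` from every block, orient the smaller design, and put
`x` back into each of the at most three sequences of blocks through `x`. Pairs avoiding `x` are
unaffected, and `(x, y)` and `(y, x)` are each realised at most once provided every point `y`
shared by two blocks through `x` comes after `x` in exactly one of them.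

Two blocks never carry a common pair in the same order, so they list their common points in
opposite orders; hence it suffices that the numbers of common points placed before `x` in the two
blocks add up to the number of common points. For three blocks these are three linear conditions
on the prefix counts of the pairwise intersections along the three sequences. Since no point
other than `x` lies in all three blocks, these counts form monotone lattice paths, and a discrete
intermediate value argument solves the three conditions simultaneously.
-/

open scoped List

section Lists

variable {α : Type*}

theorem List.Nodup.mem_drop_iff_notMem_take {L : List α} (h : L.Nodup) {y : α} (hy : y ∈ L)
    (p : ℕ) : y ∈ L.drop p ↔ y ∉ L.take p := by
  refine ⟨fun hd ht => List.disjoint_take_drop h le_rfl ht hd, fun ht => ?_⟩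
  rw [← List.take_append_drop p L, List.mem_append] at hy
  exact hy.resolve_left ht

theorem List.pair_sublist_of_mem_take_of_mem_drop {L : List α} {p : ℕ} {y z : α}
    (hy : y ∈ L.take p) (hz : z ∈ L.drop p) : [y, z] <+ L := by
  rw [← List.take_append_drop p L]
  exact (List.singleton_sublist.2 hy).append (List.singleton_sublist.2 hz)

theorem List.pair_sublist_append_cons_iff_mem_right {l₁ l₂ : List α} {x y : α} (hx : x ∉ l₁) :
    [x, y] <+ l₁ ++ x :: l₂ ↔ y ∈ l₂ := by
  refine ⟨fun h => ?_, fun hy => ?_⟩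
  · obtain ⟨s₁, s₂, hs, hs₁, hs₂⟩ := List.sublist_append_iff.1 h
    rcases s₁ with _ | ⟨a, s₁⟩
    · rw [List.nil_append] at hs
      subst hs
      exact List.singleton_sublist.1 (List.cons_sublist_cons.1 hs₂)
    · obtain rfl : a = x := (List.cons.inj hs).1.symm
      exact absurd (hs₁.subset List.mem_cons_self) hx
  · exact (List.cons_sublist_cons.2 (List.singleton_sublist.2 hy)).trans
      (List.sublist_append_right l₁ _)

theorem List.pair_sublist_append_cons_iff_mem_left {l₁ l₂ : List α} {x y : α} (hx : x ∉ l₂) :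
    [y, x] <+ l₁ ++ x :: l₂ ↔ y ∈ l₁ := by
  rw [← List.reverse_sublist]
  simpa using List.pair_sublist_append_cons_iff_mem_right (l₁ := l₂.reverse)
    (l₂ := l₁.reverse) (y := y) (by simpa using hx)

theorem List.sublist_append_cons_iff [DecidableEq α] {s l₁ l₂ : List α} {x : α} (hxs : x ∉ s)
    (hx : x ∉ l₁) : s <+ l₁ ++ x :: l₂ ↔ s <+ l₁ ++ l₂ := by
  refine ⟨fun h => ?_, fun h => h.trans ((List.sublist_cons_self x l₂).append_left l₁)⟩
  simpa [List.erase_of_not_mem hxs, List.erase_append_right _ hx] using h.erase x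

theorem List.perm_take_append_cons_drop (l : List α) (p : ℕ) (x : α) :
    (l.take p ++ x :: l.drop p).Perm (x :: l) := by
  simpa using List.perm_middle (l₁ := l.take p) (l₂ := l.drop p) (a := x)

end Lists

structure IsLatticePath (a c : ℕ → ℕ) : Prop where
  fst_zero : a 0 = 0
  snd_zero : c 0 = 0
  monotone_fst : Monotone a
  monotone_snd : Monotone c
  step : ∀ t, a (t + 1) + c (t + 1) ≤ a t + c t + 1

namespace IsLatticePath

variable {a c : ℕ → ℕ}

theorem step_cases (h : IsLatticePath a c) (t : ℕ) :
    (a (t + 1) = a t ∧ c (t + 1) ≤ c t + 1) ∨ (a (t + 1) = a t + 1 ∧ c (t + 1) = c t) := by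
  have := h.step t
  have := h.monotone_fst (Nat.le_add_right t 1)
  have := h.monotone_snd (Nat.le_add_right t 1)
  omega

variable {a₁ b₁ a₂ c₂ b₃ c₃ : ℕ → ℕ} {n₁₂ n₁₃ T₁ t₁ t₂ t₃ : ℕ}

theorem exists_advance (h₁ : IsLatticePath a₁ b₁) (h₂ : IsLatticePath a₂ c₂)
    (h₃ : IsLatticePath b₃ c₃) (ha₁ : a₁ T₁ = n₁₂) (hb₁ : b₁ T₁ = n₁₃) (ht₁ : t₁ ≤ T₁)
    (hA : a₁ t₁ + a₂ t₂ = n₁₂) (hB : b₁ t₁ + b₃ t₃ = n₁₃) (hne : t₁ < T₁ ∨ 0 < t₂ ∨ 0 < t₃)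
    (back₂ : ∀ s, t₂ = s + 1 → a₂ (s + 1) = a₂ s + 1 ∧ c₂ (s + 1) = c₂ s)
    (back₃ : ∀ s, t₃ = s + 1 → b₃ (s + 1) = b₃ s + 1 ∧ c₃ (s + 1) = c₃ s) :
    ∃ s₁ s₂ s₃, s₁ ≤ T₁ ∧ a₁ s₁ + a₂ s₂ = n₁₂ ∧ b₁ s₁ + b₃ s₃ = n₁₃ ∧
      T₁ - s₁ + s₂ + s₃ < T₁ - t₁ + t₂ + t₃ ∧ c₂ t₂ + c₃ t₃ = c₂ s₂ + c₃ s₃ := by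
  have pos₂ : 0 < a₂ t₂ → ∃ s, t₂ = s + 1 := fun h =>
    Nat.exists_eq_add_one_of_ne_zero fun h0 => by simp [h0, h₂.fst_zero] at h
  have pos₃ : 0 < b₃ t₃ → ∃ s, t₃ = s + 1 := fun h =>
    Nat.exists_eq_add_one_of_ne_zero fun h0 => by simp [h0, h₃.fst_zero] at h
  have ht₁' : t₁ < T₁ := by
    refine (Nat.lt_or_ge t₁ T₁).resolve_right fun hT => ?_
    obtain rfl : t₁ = T₁ := le_antisymm ht₁ hT
    rcases hne with h | h | h
    · omega
    · obtain ⟨s, rfl⟩ := Nat.exists_eq_add_one_of_ne_zero h.ne'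
      have := back₂ s rfl
      omega
    · obtain ⟨s, rfl⟩ := Nat.exists_eq_add_one_of_ne_zero h.ne'
      have := back₃ s rfl
      omega
  have hle₁ := h₁.monotone_fst (show t₁ + 1 ≤ T₁ from ht₁')
  have hle₂ := h₁.monotone_snd (show t₁ + 1 ≤ T₁ from ht₁')
  rcases h₁.step_cases t₁ with ⟨ha, hb⟩ | ⟨ha, hb⟩
  · rcases (h₁.monotone_snd (Nat.le_add_right t₁ 1)).eq_or_lt with hb' | hb'
    · exact ⟨t₁ + 1, t₂, t₃, ht₁', by omega, by omega, by omega, rfl⟩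
    · obtain ⟨s, rfl⟩ := pos₃ (by omega)
      have := back₃ s rfl
      exact ⟨t₁ + 1, t₂, s, ht₁', by omega, by omega, by omega, by omega⟩
  · obtain ⟨s, rfl⟩ := pos₂ (by omega)
    have := back₂ s rfl
    exact ⟨t₁ + 1, s, t₃, ht₁', by omega, by omega, by omega, by omega⟩

/-- A move of the walk in `exists_meeting`: retreat along path 2 or 3 where this keeps `a₂`
resp. `b₃`; otherwise every retreat raises `a₂` resp. `b₃` by one and can be paired with an
advance along path 1. -/
theorem exists_move (h₁ : IsLatticePath a₁ b₁) (h₂ : IsLatticePath a₂ c₂)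
    (h₃ : IsLatticePath b₃ c₃) (ha₁ : a₁ T₁ = n₁₂) (hb₁ : b₁ T₁ = n₁₃) (ht₁ : t₁ ≤ T₁)
    (hA : a₁ t₁ + a₂ t₂ = n₁₂) (hB : b₁ t₁ + b₃ t₃ = n₁₃) (hne : t₁ < T₁ ∨ 0 < t₂ ∨ 0 < t₃) :
    ∃ s₁ s₂ s₃, s₁ ≤ T₁ ∧ a₁ s₁ + a₂ s₂ = n₁₂ ∧ b₁ s₁ + b₃ s₃ = n₁₃ ∧
      T₁ - s₁ + s₂ + s₃ < T₁ - t₁ + t₂ + t₃ ∧ c₂ t₂ + c₃ t₃ ≤ c₂ s₂ + c₃ s₃ + 1 := by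
  by_cases hm₂ : ∃ s, t₂ = s + 1 ∧ a₂ (s + 1) = a₂ s
  · obtain ⟨s, rfl, hs⟩ := hm₂
    have := h₂.step s
    exact ⟨t₁, s, t₃, ht₁, by omega, hB, by omega, by omega⟩
  by_cases hm₃ : ∃ s, t₃ = s + 1 ∧ b₃ (s + 1) = b₃ s
  · obtain ⟨s, rfl, hs⟩ := hm₃
    have := h₃.step s
    exact ⟨t₁, t₂, s, ht₁, hA, by omega, by omega, by omega⟩
  push Not at hm₂ hm₃
  obtain ⟨s₁, s₂, s₃, hs₁, hA', hB', hμ, hC⟩ := exists_advance h₁ h₂ h₃ ha₁ hb₁ ht₁ hA hB hne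
    (fun s hs => (h₂.step_cases s).resolve_left fun h => hm₂ s hs h.1)
    (fun s hs => (h₃.step_cases s).resolve_left fun h => hm₃ s hs h.1)
  exact ⟨s₁, s₂, s₃, hs₁, hA', hB', hμ, hC.le.trans (Nat.le_succ _)⟩

/-- Walk from `(0, T₂, T₃)`, where `c₂ + c₃ = 2 n₂₃`, towards `(T₁, 0, 0)`, where it is `0`,
keeping the first two equations; since `c₂ + c₃` drops by at most one per move, it hits `n₂₃`. -/
theorem exists_meeting {n₂₃ T₂ T₃ : ℕ} (h₁ : IsLatticePath a₁ b₁) (h₂ : IsLatticePath a₂ c₂)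
    (h₃ : IsLatticePath b₃ c₃) (ha₁ : a₁ T₁ = n₁₂) (hb₁ : b₁ T₁ = n₁₃) (ha₂ : a₂ T₂ = n₁₂)
    (hc₂ : c₂ T₂ = n₂₃) (hb₃ : b₃ T₃ = n₁₃) (hc₃ : c₃ T₃ = n₂₃) :
    ∃ t₁ t₂ t₃, a₁ t₁ + a₂ t₂ = n₁₂ ∧ b₁ t₁ + b₃ t₃ = n₁₃ ∧ c₂ t₂ + c₃ t₃ = n₂₃ := by
  suffices H : ∀ μ t₁ t₂ t₃, T₁ - t₁ + t₂ + t₃ = μ → t₁ ≤ T₁ → a₁ t₁ + a₂ t₂ = n₁₂ →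
      b₁ t₁ + b₃ t₃ = n₁₃ → n₂₃ ≤ c₂ t₂ + c₃ t₃ →
      ∃ t₁ t₂ t₃, a₁ t₁ + a₂ t₂ = n₁₂ ∧ b₁ t₁ + b₃ t₃ = n₁₃ ∧ c₂ t₂ + c₃ t₃ = n₂₃ from
    H _ 0 T₂ T₃ rfl (Nat.zero_le _) (by simp [h₁.fst_zero, ha₂])
      (by simp [h₁.snd_zero, hb₃]) (by omega)
  intro μ
  induction μ using Nat.strong_induction_on with
  | _ μ ih =>
  intro t₁ t₂ t₃ hμ ht₁ hA hB hC
  rcases hC.eq_or_lt with hC | hC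
  · exact ⟨t₁, t₂, t₃, hA, hB, hC.symm⟩
  by_cases hne : t₁ < T₁ ∨ 0 < t₂ ∨ 0 < t₃
  · obtain ⟨s₁, s₂, s₃, hs₁, hA', hB', hμ', hC'⟩ := exists_move h₁ h₂ h₃ ha₁ hb₁ ht₁ hA hB hne
    exact ih _ (hμ ▸ hμ') s₁ s₂ s₃ rfl hs₁ hA' hB' (by omega)
  · obtain ⟨rfl, rfl⟩ : t₂ = 0 ∧ t₃ = 0 := by omega
    simp [h₂.snd_zero, h₃.snd_zero] at hC

end IsLatticePath

theorem Finset.mem_iff_notMem_of_card_add_card_eq {α : Type*} [DecidableEq α]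
    {A B S : Finset α} (hA : A ⊆ S) (hB : B ⊆ S) (hcard : A.card + B.card = S.card)
    (hsplit : ∀ y ∈ A ∩ B, ∀ z ∈ S, z ∈ A ∪ B) : ∀ y ∈ S, y ∈ A ↔ y ∉ B := by
  have hunion := Finset.card_union_add_card_inter A B
  have hinter : A ∩ B = ∅ := by
    refine Finset.eq_empty_of_forall_notMem fun y hy => ?_
    have hcover : A ∪ B = S :=
      (Finset.union_subset hA hB).antisymm fun z hz => hsplit y hy z hz
    have := Finset.card_pos.2 ⟨y, hy⟩
    rw [hcover] at hunion
    omega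
  have hcover : A ∪ B = S := Finset.eq_of_subset_of_card_le (Finset.union_subset hA hB)
    (by rw [hinter, Finset.card_empty] at hunion; omega)
  intro y hy
  have h₁ : y ∈ A ∪ B := hcover ▸ hy
  have h₂ : y ∉ A ∩ B := hinter ▸ Finset.notMem_empty y
  rw [Finset.mem_union] at h₁
  rw [Finset.mem_inter] at h₂
  tauto

section Cuts

variable {α : Type*} [DecidableEq α]

def prefixCount (S : Finset α) (L : List α) (t : ℕ) : ℕ := (L.take t).countP (· ∈ S)

theorem List.Nodup.countP_mem_eq_card {L : List α} (h : L.Nodup) (S : Finset α) :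
    L.countP (· ∈ S) = (S.filter (· ∈ L)).card := by
  rw [List.countP_eq_length_filter, ← List.toFinset_card_of_nodup (h.filter _),
    List.toFinset_filter]
  congr 1
  ext y
  simp [and_comm]

theorem prefixCount_length {L : List α} (h : L.Nodup) {S : Finset α} (hS : S ⊆ L.toFinset) :
    prefixCount S L L.length = S.card := by
  rw [prefixCount, List.take_length, h.countP_mem_eq_card, Finset.filter_true_of_mem]
  simpa [Finset.subset_iff] using hS

theorem isLatticePath_prefixCount {S S' : Finset α} (hS : Disjoint S S') (L : List α) :
    IsLatticePath (prefixCount S L) (prefixCount S' L) where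
  fst_zero := by simp [prefixCount]
  snd_zero := by simp [prefixCount]
  monotone_fst := monotone_nat_of_le_succ fun t =>
    (List.take_sublist_take_left (Nat.le_add_right t 1)).countP_le
  monotone_snd := monotone_nat_of_le_succ fun t =>
    (List.take_sublist_take_left (Nat.le_add_right t 1)).countP_le
  step t := by
    simp only [prefixCount, List.take_add_one, List.countP_append]
    cases L[t]? with
    | none => simp
    | some y =>
      have : y ∈ S → y ∉ S' := fun hy => Finset.disjoint_left.1 hS hy
      by_cases hy : y ∈ S <;> by_cases hy' : y ∈ S' <;> simp_all <;> omega

/-- Inserting a new point at position `p` of `L` and at position `p'` of `L'` puts each common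
point of `L` and `L'` after it in exactly one of the two lists. -/
def CutsOpposite (L : List α) (p : ℕ) (L' : List α) (p' : ℕ) : Prop :=
  ∀ y ∈ L, y ∈ L' → (y ∈ L.drop p ↔ y ∉ L'.drop p')

theorem CutsOpposite.symm {L L' : List α} {p p' : ℕ} (h : CutsOpposite L p L' p') :
    CutsOpposite L' p' L p := fun y hy hy' => by
  have := h y hy' hy
  tauto

def SharesNoPair (L L' : List α) : Prop := ∀ ⦃y z : α⦄, [y, z] <+ L → ¬ [y, z] <+ L'

/-- `L'` lists the common points in the reverse order of `L`, so the common points before the cut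
in `L` and those before the cut in `L'` partition them as soon as their numbers add up. -/
theorem cutsOpposite_of_prefixCount_add {L L' : List α} {p p' : ℕ} (h : L.Nodup)
    (h' : L'.Nodup) (hLL' : SharesNoPair L L')
    (hcount : prefixCount (L.toFinset ∩ L'.toFinset) L p +
      prefixCount (L.toFinset ∩ L'.toFinset) L' p' = (L.toFinset ∩ L'.toFinset).card) :
    CutsOpposite L p L' p' := by
  set S := L.toFinset ∩ L'.toFinset
  have hmemS (y) : y ∈ S ↔ y ∈ L ∧ y ∈ L' := by simp [S]
  rw [prefixCount, prefixCount, (h.sublist (List.take_sublist _ _)).countP_mem_eq_card,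
    (h'.sublist (List.take_sublist _ _)).countP_mem_eq_card] at hcount
  have key := Finset.mem_iff_notMem_of_card_add_card_eq (Finset.filter_subset _ _)
    (Finset.filter_subset _ _) hcount fun y hy z hz => by
      by_contra hz'
      simp only [Finset.mem_inter, Finset.mem_union, Finset.mem_filter, not_or, not_and] at hy hz'
      refine hLL' (z := z) (List.pair_sublist_of_mem_take_of_mem_drop hy.1.2 (p := p) ?_)
        (List.pair_sublist_of_mem_take_of_mem_drop hy.2.2 (p := p') ?_)
      · exact (h.mem_drop_iff_notMem_take ((hmemS z).1 hz).1 p).2 (hz'.1 hz)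
      · exact (h'.mem_drop_iff_notMem_take ((hmemS z).1 hz).2 p').2 (hz'.2 hz)
  intro y hy hy'
  have hyS := (hmemS y).2 ⟨hy, hy'⟩
  have := key y hyS
  simp only [Finset.mem_filter, hyS, true_and] at this
  rw [h.mem_drop_iff_notMem_take hy, h'.mem_drop_iff_notMem_take hy']
  tauto

theorem exists_cutsOpposite_three {L₁ L₂ L₃ : List α} (h₁ : L₁.Nodup) (h₂ : L₂.Nodup)
    (h₃ : L₃.Nodup) (h₁₂ : SharesNoPair L₁ L₂) (h₁₃ : SharesNoPair L₁ L₃)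
    (h₂₃ : SharesNoPair L₂ L₃) (hdisj : ∀ y ∈ L₁, y ∈ L₂ → y ∉ L₃) :
    ∃ p₁ p₂ p₃, CutsOpposite L₁ p₁ L₂ p₂ ∧ CutsOpposite L₁ p₁ L₃ p₃ ∧
      CutsOpposite L₂ p₂ L₃ p₃ := by
  have disj {M₁ M₂ M₃ M₄ : List α} (h : ∀ y ∈ M₁, y ∈ M₂ → y ∈ M₃ → y ∈ M₄ → False) :
      Disjoint (M₁.toFinset ∩ M₂.toFinset) (M₃.toFinset ∩ M₄.toFinset) :=
    Finset.disjoint_left.2 fun y hy hy' => by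
      simp only [Finset.mem_inter, List.mem_toFinset] at hy hy'
      exact h _ hy.1 hy.2 hy'.1 hy'.2
  obtain ⟨t₁, t₂, t₃, e₁₂, e₁₃, e₂₃⟩ := IsLatticePath.exists_meeting
    (isLatticePath_prefixCount (disj fun y h h' _ h'' => hdisj y h h' h'') L₁)
    (isLatticePath_prefixCount (disj fun y h h' _ h'' => hdisj y h h' h'') L₂)
    (isLatticePath_prefixCount (disj fun y h h' h'' _ => hdisj y h h'' h') L₃)
    (prefixCount_length h₁ Finset.inter_subset_left)
    (prefixCount_length h₁ Finset.inter_subset_left)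
    (prefixCount_length h₂ Finset.inter_subset_right)
    (prefixCount_length h₂ Finset.inter_subset_left)
    (prefixCount_length h₃ Finset.inter_subset_right)
    (prefixCount_length h₃ Finset.inter_subset_right)
  exact ⟨t₁, t₂, t₃, cutsOpposite_of_prefixCount_add h₁ h₂ h₁₂ e₁₂,
    cutsOpposite_of_prefixCount_add h₁ h₃ h₁₃ e₁₃, cutsOpposite_of_prefixCount_add h₂ h₃ h₂₃ e₂₃⟩

end Cuts

section Packing

variable {α ι : Type*} [DecidableEq α]

def IsDirectedPacking (T : ι → List α) : Prop := Pairwise fun i j => SharesNoPair (T i) (T j)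

theorem exists_cutsOpposite {T : ι → List α} (hnd : ∀ i, (T i).Nodup) (hT : IsDirectedPacking T)
    {I : Set ι} (hI : I.encard ≤ 3) (hcommon : ∀ y, {i | i ∈ I ∧ y ∈ T i}.encard ≤ 2) :
    ∃ pos : ι → ℕ, ∀ i ∈ I, ∀ j ∈ I, i ≠ j → CutsOpposite (T i) (pos i) (T j) (pos j) := by
  classical
  obtain ⟨-, n, hn, hn3⟩ := (Set.encard_le_coe_iff (k := 3)).1 hI
  rcases (by omega : n ≤ 1 ∨ n = 2 ∨ n = 3) with hn1 | rfl | rfl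
  · have hsub : I.Subsingleton :=
      Set.encard_le_one_iff_subsingleton.1 (by rw [hn]; exact_mod_cast hn1)
    exact ⟨0, fun i hi j hj hij => absurd (hsub hi hj) hij⟩
  · obtain ⟨i, j, hij, rfl⟩ := Set.encard_eq_two.1 hn
    have h : CutsOpposite (T i) 0 (T j) (T j).length := fun y hy _ => by simpa using hy
    refine ⟨fun t => if t = i then 0 else (T j).length, ?_⟩
    rintro a (rfl | rfl) b (rfl | rfl) hab
    all_goals first
      | exact absurd rfl hab
      | simpa [hij, hij.symm] using h
      | simpa [hij, hij.symm] using h.symm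
  · obtain ⟨i, j, k, hij, hik, hjk, rfl⟩ := Set.encard_eq_three.1 hn
    have hdisj : ∀ y ∈ T i, y ∈ T j → y ∉ T k := fun y hyi hyj hyk => by
      have := (Set.encard_le_encard (s := {i, j, k})
        (t := {l | l ∈ ({i, j, k} : Set ι) ∧ y ∈ T l})
        (by rintro l (rfl | rfl | rfl) <;> simp [*])).trans (hcommon y)
      rw [hn] at this
      norm_num at this
    obtain ⟨p₁, p₂, p₃, h₁₂, h₁₃, h₂₃⟩ := exists_cutsOpposite_three (hnd i) (hnd j) (hnd k)
      (hT hij) (hT hik) (hT hjk) hdisj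
    refine ⟨fun t => if t = i then p₁ else if t = j then p₂ else p₃, ?_⟩
    rintro a (rfl | rfl | rfl) b (rfl | rfl | rfl) hab
    all_goals first
      | exact absurd rfl hab
      | simp [hij.symm, hik.symm, hjk.symm, *, CutsOpposite.symm]

theorem IsDirectedPacking.insertAt {T : ι → List α} (hT : IsDirectedPacking T)
    (hnd : ∀ i, (T i).Nodup) {x : α} (hx : ∀ i, x ∉ T i) (P : ι → Prop) [DecidablePred P]
    {pos : ι → ℕ}
    (hpos : ∀ i, P i → ∀ j, P j → i ≠ j → CutsOpposite (T i) (pos i) (T j) (pos j)) :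
    IsDirectedPacking fun i =>
      if P i then (T i).take (pos i) ++ x :: (T i).drop (pos i) else T i := by
  set T' := fun i => if P i then (T i).take (pos i) ++ x :: (T i).drop (pos i) else T i
  have hx_take (i) : x ∉ (T i).take (pos i) := fun h => hx i (List.take_subset _ _ h)
  have hx_drop (i) : x ∉ (T i).drop (pos i) := fun h => hx i (List.drop_subset _ _ h)
  have after (i z) (h : [x, z] <+ T' i) : P i ∧ z ∈ (T i).drop (pos i) := by
    simp only [T'] at h
    split_ifs at h with hi
    · exact ⟨hi, (List.pair_sublist_append_cons_iff_mem_right (hx_take i)).1 h⟩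
    · exact absurd (h.subset List.mem_cons_self) (hx i)
  have before (i y) (h : [y, x] <+ T' i) : P i ∧ y ∈ (T i).take (pos i) := by
    simp only [T'] at h
    split_ifs at h with hi
    · exact ⟨hi, (List.pair_sublist_append_cons_iff_mem_left (hx_drop i)).1 h⟩
    · exact absurd (h.subset (by simp)) (hx i)
  have away (i y z) (hy : y ≠ x) (hz : z ≠ x) (h : [y, z] <+ T' i) : [y, z] <+ T i := by
    simp only [T'] at h
    split_ifs at h
    · simpa using (List.sublist_append_cons_iff (by simp [hy.symm, hz.symm]) (hx_take i)).1 h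
    · exact h
  intro i j hij y z hi hj
  by_cases hy : y = x
  · subst hy
    obtain ⟨hPi, hzi⟩ := after i z hi
    obtain ⟨hPj, hzj⟩ := after j z hj
    exact (hpos i hPi j hPj hij z (List.drop_subset _ _ hzi) (List.drop_subset _ _ hzj)).1 hzi hzj
  by_cases hz : z = x
  · subst hz
    obtain ⟨hPi, hyi⟩ := before i y hi
    obtain ⟨hPj, hyj⟩ := before j y hj
    have hyi' := List.take_subset _ _ hyi
    have hyj' := List.take_subset _ _ hyj
    have := hpos i hPi j hPj hij y hyi' hyj'
    rw [(hnd i).mem_drop_iff_notMem_take hyi', (hnd j).mem_drop_iff_notMem_take hyj'] at this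
    exact this.2 (not_not_intro hyj) hyi
  · exact hT hij (away i y z hy hz hi) (away j y z hy hz hj)

theorem exists_directedPacking (s : Finset α) (b : ι → Finset α) (hs : ∀ i, b i ⊆ s)
    (hpair : ∀ x y, x ≠ y → {i | x ∈ b i ∧ y ∈ b i}.encard ≤ 2)
    (hfreq : ∀ x, {i | x ∈ b i}.encard ≤ 3) :
    ∃ T : ι → List α, (∀ i, (T i).Nodup ∧ (T i).toFinset = b i) ∧ IsDirectedPacking T := by
  induction s using Finset.induction_on generalizing b with
  | empty =>
    refine ⟨fun _ => [], fun i => ⟨List.nodup_nil, (Finset.subset_empty.1 (hs i)).symm⟩, ?_⟩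
    intro i j _ y z h
    simp at h
  | @insert x s hxs ih =>
    obtain ⟨T, hTb, hT⟩ := ih (fun i => (b i).erase x) (fun i => Finset.subset_insert_iff.1 (hs i))
      (fun y z hyz => (Set.encard_le_encard (Set.ofPred_subset_ofPred.2 fun i hi =>
        ⟨Finset.mem_of_mem_erase hi.1, Finset.mem_of_mem_erase hi.2⟩)).trans (hpair y z hyz))
      (fun y => (Set.encard_le_encard (Set.ofPred_subset_ofPred.2 fun i hi =>
        Finset.mem_of_mem_erase hi)).trans (hfreq y))
    have hmem (i y) : y ∈ T i ↔ y ≠ x ∧ y ∈ b i := by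
      rw [← List.mem_toFinset, (hTb i).2, Finset.mem_erase]
    have hx (i) : x ∉ T i := fun h => ((hmem i x).1 h).1 rfl
    have hcommon (y) : {i | i ∈ {i | x ∈ b i} ∧ y ∈ T i}.encard ≤ 2 := by
      by_cases hy : y = x
      · simp [hy, hx]
      · exact (Set.encard_le_encard (Set.ofPred_subset_ofPred.2 fun i hi =>
          ⟨hi.1, ((hmem i y).1 hi.2).2⟩)).trans (hpair x y (Ne.symm hy))
    obtain ⟨pos, hpos⟩ := exists_cutsOpposite (fun i => (hTb i).1) hT (hfreq x) hcommon
    refine ⟨fun i => if x ∈ b i then (T i).take (pos i) ++ x :: (T i).drop (pos i) else T i,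
      fun i => ?_, hT.insertAt (fun i => (hTb i).1) hx _ hpos⟩
    dsimp only
    split_ifs with hxi
    · have hperm := List.perm_take_append_cons_drop (T i) (pos i) x
      refine ⟨hperm.nodup_iff.2 (List.nodup_cons.2 ⟨hx i, (hTb i).1⟩), ?_⟩
      rw [List.toFinset_eq_of_perm _ _ hperm, List.toFinset_cons, (hTb i).2,
        Finset.insert_erase hxi]
    · exact ⟨(hTb i).1, (hTb i).2.trans (Finset.erase_eq_of_notMem hxi)⟩

end Packing

theorem List.coe_ofFn_countP_eq_encard {β : Type*} {n : ℕ} (f : Fin n → β) (P : β → Prop)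
    [DecidablePred P] :
    (((List.ofFn f : Multiset β).countP P : ℕ) : ℕ∞) = {i | P (f i)}.encard := by
  rw [← Fin.univ_val_map, Multiset.countP_map, ← Finset.filter_val, Finset.card_val,
    ← Set.encard_coe_eq_coe_finsetCard, Finset.coe_filter]
  simp

theorem List.forall₂_ofFn {β γ : Type*} {R : β → γ → Prop} {n : ℕ} {f : Fin n → β} {g : Fin n → γ}
    (h : ∀ i, R (f i) (g i)) : List.Forall₂ R (List.ofFn f) (List.ofFn g) := by
  induction n with
  | zero => simp
  | succ n ih =>
    rw [List.ofFn_succ, List.ofFn_succ]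
    exact .cons (h 0) (ih fun i => h i.succ)

open scoped Classical in
theorem stmt14 (v : ℕ) (B : List (Finset (Fin v)))
    (hpair : ∀ x y : Fin v, x ≠ y →
      (B : Multiset (Finset (Fin v))).countP (fun b => x ∈ b ∧ y ∈ b) ≤ 2)
    (hfreq : ∀ x : Fin v, (B : Multiset (Finset (Fin v))).countP (fun b => x ∈ b) ≤ 3) :
    ∃ T : List (List (Fin v)),
      List.Forall₂ (fun (L : List (Fin v)) (b : Finset (Fin v)) =>
        L.Nodup ∧ L.toFinset = b) T B ∧
      ∀ x y : Fin v, x ≠ y →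
        (T : Multiset (List (Fin v))).countP (fun L => List.Sublist [x, y] L) ≤ 1 := by
  rw [← List.ofFn_get B] at hpair hfreq ⊢
  obtain ⟨T, hTB, hT⟩ := exists_directedPacking Finset.univ B.get (fun _ => Finset.subset_univ _)
    (fun x y hxy => by
      rw [← List.coe_ofFn_countP_eq_encard B.get fun b => x ∈ b ∧ y ∈ b]
      exact_mod_cast hpair x y hxy)
    (fun x => by
      rw [← List.coe_ofFn_countP_eq_encard B.get fun b => x ∈ b]
      exact_mod_cast hfreq x)
  refine ⟨List.ofFn T, List.forall₂_ofFn hTB, fun x y _ => ?_⟩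
  have : {i | [x, y] <+ T i}.encard ≤ 1 :=
    Set.encard_le_one_iff.2 fun i j hi hj => by_contra fun hij => hT hij hi hj
  rw [← List.coe_ofFn_countP_eq_encard T fun L => [x, y] <+ L] at this
  exact_mod_cast this
end

section
/- Let v, n, q, r, λ be nonnegative integers with q ≥ 1, 0 ≤ r < v, and let N_1, …, N_n be nonnegative integers with Σ_{i=1}^n N_i ≤ v and Σ_{i=1}^n i·N_i = q·v + r. Then Σ_{i=1}^n C(i, λ+1)·N_i ≥ v·C(q, λ+1) + r·C(q, λ), provided n ≥ q+1. -/
/-!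
The map `i ↦ (i.choose (λ + 1) : ℤ)` is convex with forward differences `i.choose λ`, so it lies
above its secant line through `q` and `q + 1`. Summing this against the frequencies `N i` bounds
`∑ C(i, λ+1) N i` below by `C(q, λ+1) S + (q v + r - q S) C(q, λ)` with `S = ∑ N i ≤ v`, and the
deficit `v - S` only helps because `C(q, λ+1) ≤ q C(q, λ)`.
-/

open Finset

section ConvexSequence

variable {f : ℕ → ℤ}

theorem add_mul_sub_le_of_monotone_sub (hf : Monotone fun i => f (i + 1) - f i) (q d : ℕ) :
    f q + d * (f (q + 1) - f q) ≤ f (q + d) := by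
  induction d with
  | zero => simp
  | succ d ih =>
    have hΔ : f (q + 1) - f q ≤ f (q + d + 1) - f (q + d) := hf (Nat.le_add_right q d)
    rw [← add_assoc]
    push_cast
    linarith

theorem sub_mul_sub_le_of_monotone_sub (hf : Monotone fun i => f (i + 1) - f i) (i d : ℕ) :
    f (i + d) - d * (f (i + d + 1) - f (i + d)) ≤ f i := by
  induction d with
  | zero => simp
  | succ d ih =>
    have hΔ : f (i + d + 1) - f (i + d) ≤ f (i + d + 1 + 1) - f (i + d + 1) :=
      hf (Nat.le_succ _)
    have hd : (d : ℤ) * (f (i + d + 1) - f (i + d)) ≤ d * (f (i + d + 1 + 1) - f (i + d + 1)) :=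
      mul_le_mul_of_nonneg_left hΔ d.cast_nonneg
    rw [← add_assoc]
    push_cast
    linarith

theorem secant_le_of_monotone_sub (hf : Monotone fun i => f (i + 1) - f i) (q i : ℕ) :
    f q + ((i : ℤ) - q) * (f (q + 1) - f q) ≤ f i := by
  rcases le_total q i with hqi | hiq
  · obtain ⟨d, rfl⟩ := Nat.exists_eq_add_of_le hqi
    simpa using add_mul_sub_le_of_monotone_sub hf q d
  · obtain ⟨d, rfl⟩ := Nat.exists_eq_add_of_le hiq
    simpa [sub_eq_add_neg] using sub_mul_sub_le_of_monotone_sub hf i d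

end ConvexSequence

theorem Nat.monotone_choose_succ_sub_choose (k : ℕ) :
    Monotone fun i => ((i + 1).choose (k + 1) : ℤ) - i.choose (k + 1) := by
  intro i j hij
  simp only [Nat.choose_succ_succ, Nat.cast_add, add_sub_cancel_right]
  exact_mod_cast Nat.choose_le_choose k hij

theorem Nat.choose_succ_add_sub_mul_choose_le (q k i : ℕ) :
    (q.choose (k + 1) : ℤ) + ((i : ℤ) - q) * q.choose k ≤ i.choose (k + 1) := by
  simpa [Nat.choose_succ_succ] using
    secant_le_of_monotone_sub (f := fun i => (i.choose (k + 1) : ℤ))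
      (Nat.monotone_choose_succ_sub_choose k) q i

theorem Nat.choose_succ_le_mul_choose (q k : ℕ) : q.choose (k + 1) ≤ q * q.choose k :=
  calc q.choose (k + 1) ≤ q.choose (k + 1) * (k + 1) := Nat.le_mul_of_pos_right _ k.succ_pos
    _ = q.choose k * (q - k) := Nat.choose_succ_right_eq q k
    _ ≤ q * q.choose k := by rw [mul_comm]; exact Nat.mul_le_mul_right _ (Nat.sub_le q k)

theorem stmt17_general (v n q r lam : ℕ) (N : ℕ → ℕ)
    (h1 : ∑ i ∈ Finset.Icc 1 n, N i ≤ v)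
    (h2 : ∑ i ∈ Finset.Icc 1 n, i * N i = q * v + r) :
    v * q.choose (lam + 1) + r * q.choose lam
      ≤ ∑ i ∈ Finset.Icc 1 n, i.choose (lam + 1) * N i := by
  set S := ∑ i ∈ Icc 1 n, N i
  have hS : (S : ℤ) ≤ v := by exact_mod_cast h1
  have hT : ∑ i ∈ Icc 1 n, (i : ℤ) * N i = q * v + r := by exact_mod_cast h2
  have hC : (q.choose (lam + 1) : ℤ) ≤ q * q.choose lam := by
    exact_mod_cast Nat.choose_succ_le_mul_choose q lam
  have hsecant : ∑ i ∈ Icc 1 n, (q.choose (lam + 1) + ((i : ℤ) - q) * q.choose lam) * N i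
      ≤ ∑ i ∈ Icc 1 n, (i.choose (lam + 1) : ℤ) * N i :=
    sum_le_sum fun i _ => mul_le_mul_of_nonneg_right
      (Nat.choose_succ_add_sub_mul_choose_le q lam i) (N i).cast_nonneg
  have hsplit : ∑ i ∈ Icc 1 n, (q.choose (lam + 1) + ((i : ℤ) - q) * q.choose lam) * N i
      = (q.choose (lam + 1) - q * q.choose lam) * S
        + (∑ i ∈ Icc 1 n, (i : ℤ) * N i) * q.choose lam := by
    simp only [S, Nat.cast_sum, mul_sum, sum_mul, ← sum_add_distrib]
    exact sum_congr rfl fun i _ => by ring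
  rw [hsplit, hT] at hsecant
  zify
  linarith [mul_le_mul_of_nonneg_left hS (sub_nonneg.mpr hC)]

theorem stmt17 (v n q r lam : ℕ) (N : ℕ → ℕ) (hq : 1 ≤ q) (hr : r < v) (hn : q + 1 ≤ n)
    (h1 : ∑ i ∈ Finset.Icc 1 n, N i ≤ v)
    (h2 : ∑ i ∈ Finset.Icc 1 n, i * N i = q * v + r) :
    v * q.choose (lam + 1) + r * q.choose lam
      ≤ ∑ i ∈ Finset.Icc 1 n, i.choose (lam + 1) * N i :=
  stmt17_general v n q r lam N h1 h2
end
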